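/- arXiv:1109.5063 — 8 statements merged into one kernel-verified Lean document; each statement's English description precedes it below -/
import Mathlib

section
/- For every d ≥ 1, the minimum cardinality of a maximal equilateral set in ℓ_∞^d equals d+1, i.e. m(ℓ_∞^d) = d+1. -/
/-- A set `A` in a normed space is `lam`-equilateral if `lam > 0` and the distance
between any two distinct points of `A` equals `lam`. -/
def EquilateralWith {E : Type*} [NormedAddCommGroup E] (A : Set E) (lam : ℝ) : Prop :=
  0 < lam ∧ A.Pairwise fun x y => ‖x - y‖ = lam

/-- A set is equilateral if it is `lam`-equilateral for some `lam > 0`. -/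
def Equilateral {E : Type*} [NormedAddCommGroup E] (A : Set E) : Prop :=
  ∃ lam : ℝ, EquilateralWith A lam

/-- An equilateral set is maximal if it is not properly contained in any equilateral set. -/
def MaximalEquilateral {E : Type*} [NormedAddCommGroup E] (A : Set E) : Prop :=
  Equilateral A ∧ ∀ B : Set E, Equilateral B → A ⊆ B → B = A

namespace Stmt1

variable {d : ℕ}

lemma abs_le_of_norm {x : Fin d → ℝ} {r : ℝ} (h : ‖x‖ ≤ r) (i : Fin d) : |x i| ≤ r :=
  le_trans (by rw [← Real.norm_eq_abs]; exact norm_le_pi_norm x i) h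

lemma pi_norm_eq_of {x : Fin d → ℝ} {r : ℝ} (hr : 0 ≤ r) (h1 : ∀ i, |x i| ≤ r) {i : Fin d}
    (h2 : |x i| = r) : ‖x‖ = r := by
  apply le_antisymm
  · rw [pi_norm_le_iff_of_nonneg hr]
    intro j; rw [Real.norm_eq_abs]; exact h1 j
  · calc r = |x i| := h2.symm
      _ = ‖x i‖ := (Real.norm_eq_abs _).symm
      _ ≤ ‖x‖ := norm_le_pi_norm x i

lemma exists_abs_eq_norm (hd : 0 < d) (x : Fin d → ℝ) : ∃ i, |x i| = ‖x‖ := by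
  have : Nonempty (Fin d) := ⟨⟨0, hd⟩⟩
  obtain ⟨i, -, hi⟩ := Finset.exists_mem_eq_sup (Finset.univ : Finset (Fin d))
    Finset.univ_nonempty (fun i => ‖x i‖₊)
  refine ⟨i, ?_⟩
  rw [← Real.norm_eq_abs, Pi.norm_def, hi]
  rfl

/-- the construction: `pt c = 2·e_c + Σ_{j<c} e_j`. -/
def pt (c : Fin d) : Fin d → ℝ := fun j => if j < c then 1 else if j = c then 2 else 0

lemma pt_self (c : Fin d) : pt c c = 2 := by simp [pt]

lemma pt_abs_le (c j : Fin d) : |pt c j| ≤ 2 := by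
  unfold pt
  split_ifs <;> norm_num

lemma norm_pt (c : Fin d) : ‖pt c‖ = 2 := by
  refine pi_norm_eq_of (by norm_num) (fun j => pt_abs_le c j) (i := c) ?_
  rw [pt_self]; norm_num

lemma pt_injective : Function.Injective (pt (d := d)) := by
  intro c c' h
  by_contra hne
  have h1 : pt c c = pt c' c := by rw [h]
  rw [pt_self] at h1
  unfold pt at h1
  rcases lt_trichotomy c c' with hlt | heq | hgt
  · rw [if_pos hlt] at h1; norm_num at h1
  · exact hne heq
  · rw [if_neg (not_lt_of_gt hgt), if_neg (fun hh : c = c' => hne hh)] at h1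
    norm_num at h1

lemma dist_pt_pt {c c' : Fin d} (h : c' < c) : ‖pt c - pt c'‖ = 2 := by
  have habs : ∀ j, |(pt c - pt c') j| ≤ 2 := by
    intro j
    have h1 := pt_abs_le c j
    have h2 := pt_abs_le c' j
    simp only [Pi.sub_apply]
    -- need finer: values are in specific ranges; just case bash
    unfold pt
    split_ifs <;> norm_num
  refine pi_norm_eq_of (by norm_num) habs (i := c) ?_
  simp only [Pi.sub_apply, pt_self]
  have : pt c' c = 0 := by
    unfold pt
    rw [if_neg (not_lt_of_gt h), if_neg (ne_of_gt h)]
  rw [this]; norm_num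

lemma dist_pt_zero (c : Fin d) : ‖(0 : Fin d → ℝ) - pt c‖ = 2 := by
  rw [zero_sub, norm_neg, norm_pt]

/-- The maximal equilateral set. -/
def Amax (d : ℕ) : Set (Fin d → ℝ) := insert 0 (Set.range pt)

lemma zero_notMem_range : (0 : Fin d → ℝ) ∉ Set.range (pt (d := d)) := by
  rintro ⟨c, hc⟩
  have : pt c c = 0 := by rw [hc]; rfl
  rw [pt_self] at this; norm_num at this

lemma Amax_pairwise : (Amax d).Pairwise fun x y => ‖x - y‖ = 2 := by
  have key : ∀ x ∈ Amax d, ∀ y ∈ Amax d, x ≠ y → ‖x - y‖ = 2 := by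
    rintro x hx y hy hne
    rcases hx with rfl | ⟨c, rfl⟩
    · rcases hy with rfl | ⟨c', rfl⟩
      · exact absurd rfl hne
      · exact dist_pt_zero c'
    · rcases hy with rfl | ⟨c', rfl⟩
      · rw [← norm_neg, neg_sub, zero_sub, norm_neg, norm_pt]
      · have hcc : c ≠ c' := fun h => hne (by rw [h])
        rcases lt_or_gt_of_ne hcc with h | h
        · rw [← norm_neg, neg_sub]; exact dist_pt_pt h
        · exact dist_pt_pt h
  exact fun x hx y hy hne => key x hx y hy hne

lemma Amax_finite : (Amax d).Finite := (Set.finite_range pt).insert 0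

lemma Amax_ncard : (Amax d).ncard = d + 1 := by
  rw [Amax, Set.ncard_insert_of_notMem zero_notMem_range (Set.finite_range pt)]
  have : (Set.range (pt (d := d))) = pt '' Set.univ := by rw [Set.image_univ]
  rw [this, Set.ncard_image_of_injective _ pt_injective, Set.ncard_univ]
  simp

/-- No point is at distance 2 from every element of Amax. -/
lemma Amax_no_extension (hd : 0 < d) (x : Fin d → ℝ)
    (hx : ∀ a ∈ Amax d, ‖x - a‖ = 2) : False := by
  have h0 : ‖x - 0‖ = 2 := hx 0 (Set.mem_insert _ _)
  have hc : ∀ c : Fin d, ‖x - pt c‖ = 2 := fun c => hx (pt c) (Set.mem_insert_of_mem _ ⟨c, rfl⟩)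
  have hub : ∀ j, |x j| ≤ 2 := by
    intro j
    have := abs_le_of_norm (le_of_eq h0) j
    simpa using this
  have hlb : ∀ j, 0 ≤ x j := by
    intro j
    have := abs_le_of_norm (le_of_eq (hc j)) j
    simp only [Pi.sub_apply, pt_self] at this
    linarith [abs_le.1 this]
  -- some coordinate equals 2
  obtain ⟨i, hi⟩ := exists_abs_eq_norm hd (x - 0)
  rw [h0] at hi
  simp only [Pi.sub_apply, Pi.zero_apply, sub_zero] at hi
  have hxi : x i = 2 := by
    rcases abs_cases (x i) with ⟨h1, -⟩ | ⟨h1, -⟩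
    · linarith
    · linarith [hlb i]
  -- take the largest such coordinate
  have hSne : (Finset.univ.filter fun j => x j = 2).Nonempty := ⟨i, by simp [hxi]⟩
  obtain ⟨js, hjs_mem, hjs_max⟩ := Finset.exists_max_image _ id hSne
  have hjs : x js = 2 := (Finset.mem_filter.1 hjs_mem).2
  -- the distance condition for pt js
  obtain ⟨i2, hi2⟩ := exists_abs_eq_norm hd (x - pt js)
  rw [hc js] at hi2
  simp only [Pi.sub_apply] at hi2
  unfold pt at hi2
  rcases lt_trichotomy i2 js with hlt | heq | hgt
  · rw [if_pos hlt] at hi2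
    have h2 := abs_le.1 (hub i2)
    have := hlb i2
    rcases abs_cases (x i2 - 1) with ⟨h1, -⟩ | ⟨h1, -⟩ <;> linarith
  · subst heq
    rw [if_neg (lt_irrefl _), if_pos rfl] at hi2
    rw [hjs] at hi2
    norm_num at hi2
  · rw [if_neg (not_lt_of_gt hgt), if_neg (ne_of_gt hgt)] at hi2
    have hxi2 : x i2 = 2 := by
      have := hlb i2
      have h2 := abs_le.1 (hub i2)
      rcases abs_cases (x i2 - 0) with ⟨h1, -⟩ | ⟨h1, -⟩ <;> linarith
    have : i2 ∈ Finset.univ.filter fun j => x j = 2 := by simp [hxi2]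
    have := hjs_max i2 this
    simp only [id] at this
    exact absurd (lt_of_le_of_lt this hgt) (lt_irrefl _)

lemma extend (hd : 0 < d) (s : Finset (Fin d → ℝ)) (hne : s.Nonempty) (hcard : s.card ≤ d)
    {lam : ℝ} (hlam : 0 < lam)
    (hpw : (↑s : Set (Fin d → ℝ)).Pairwise fun x y => ‖x - y‖ = lam) :
    ∃ x, x ∉ s ∧ ∀ p ∈ s, ‖x - p‖ = lam := by
  classical
  set m : Fin d → ℝ := fun c => s.inf' hne (fun p => p c) with hm
  set M : Fin d → ℝ := fun c => s.sup' hne (fun p => p c) with hM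
  have hmle : ∀ c, ∀ p ∈ s, m c ≤ p c := fun c p hp => Finset.inf'_le (f := fun p => p c) hp
  have hleM : ∀ c, ∀ p ∈ s, p c ≤ M c := fun c p hp => Finset.le_sup' (f := fun p => p c) hp
  have hdist : ∀ p ∈ s, ∀ q ∈ s, ∀ c, |p c - q c| ≤ lam := by
    intro p hp q hq c
    by_cases hpq : p = q
    · subst hpq; simpa using hlam.le
    · have hn := hpw hp hq hpq
      have := abs_le_of_norm (le_of_eq hn) c
      simpa using this
  have hMm : ∀ c, M c - m c ≤ lam := by
    intro c
    obtain ⟨p, hp, hpe⟩ := Finset.exists_mem_eq_sup' hne (fun p => p c)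
    obtain ⟨q, hq, hqe⟩ := Finset.exists_mem_eq_inf' hne (fun p => p c)
    have : M c = p c := hpe
    have h2 : m c = q c := hqe
    rw [this, h2]
    have := hdist p hp q hq c
    linarith [abs_le.1 this]
  -- the witness lemma
  have hwit : ∀ u ∈ s, ∀ p ∈ s, u ≠ p →
      ∃ c, (u c = m c ∧ p c = M c) ∨ (u c = M c ∧ p c = m c) := by
    intro u hu p hp hup
    have hn := hpw hu hp hup
    obtain ⟨c, hc⟩ := exists_abs_eq_norm hd (u - p)
    rw [hn] at hc
    simp only [Pi.sub_apply] at hc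
    refine ⟨c, ?_⟩
    rcases abs_cases (u c - p c) with ⟨h1, -⟩ | ⟨h1, -⟩
    · -- u c = p c + lam : u is max, p is min
      right
      have hup2 : u c = p c + lam := by linarith [hc, h1]
      constructor
      · refine le_antisymm (hleM c u hu) ?_
        refine Finset.sup'_le hne _ ?_
        intro q hq
        have := hdist q hq p hp c
        have := abs_le.1 this
        linarith
      · refine le_antisymm ?_ (hmle c p hp)
        refine Finset.le_inf' hne _ ?_
        intro q hq
        have := hdist u hu q hq c
        have := abs_le.1 this
        linarith
    · -- p c = u c + lam : u is min, p is max
      left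
      have hup2 : p c = u c + lam := by linarith [hc, h1]
      constructor
      · refine le_antisymm ?_ (hmle c u hu)
        refine Finset.le_inf' hne _ ?_
        intro q hq
        have := hdist p hp q hq c
        have := abs_le.1 this
        linarith
      · refine le_antisymm (hleM c p hp) ?_
        refine Finset.sup'_le hne _ ?_
        intro q hq
        have := hdist q hq u hu c
        have := abs_le.1 this
        linarith
  -- Ext : coordinates where p is extremal
  set Ext : (Fin d → ℝ) → Finset (Fin d) :=
    fun p => Finset.univ.filter (fun c => p c = m c ∨ p c = M c) with hExt
  have hExt_mem : ∀ p c, c ∈ Ext p ↔ (p c = m c ∨ p c = M c) := by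
    intro p c; simp [hExt]
  -- main combinatorial claim
  suffices h : ∃ σ : Fin d → Bool,
      ∀ p ∈ s, ∃ c, (σ c = true ∧ p c = m c) ∨ (σ c = false ∧ p c = M c) by
    obtain ⟨σ, hσ⟩ := h
    set x : Fin d → ℝ := fun c => if σ c = true then m c + lam else M c - lam with hx
    have hxc : ∀ p ∈ s, ∀ c, |x c - p c| ≤ lam := by
      intro p hp c
      have h1 := hmle c p hp
      have h2 := hleM c p hp
      have h3 := hMm c
      by_cases hσc : σ c = true
      · have : x c = m c + lam := by simp [hx, hσc]
        rw [this, abs_le]; constructor <;> linarith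
      · have : x c = M c - lam := by simp [hx, hσc]
        rw [this, abs_le]; constructor <;> linarith
    have hdx : ∀ p ∈ s, ‖x - p‖ = lam := by
      intro p hp
      obtain ⟨c, hc⟩ := hσ p hp
      have habs : |x c - p c| = lam := by
        rcases hc with ⟨ht, hpm⟩ | ⟨hf, hpM⟩
        · have : x c = m c + lam := by simp [hx, ht]
          rw [this, hpm]; simp [abs_of_nonneg hlam.le]
        · have : x c = M c - lam := by simp [hx, hf]
          rw [this, hpM]
          rw [show M c - lam - M c = -lam by ring, abs_neg, abs_of_nonneg hlam.le]
      refine pi_norm_eq_of hlam.le (fun j => by simpa using hxc p hp j) (i := c) ?_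
      simpa using habs
    refine ⟨x, ?_, hdx⟩
    intro hxs
    have := hdx x hxs
    simp at this
    exact absurd this.symm (ne_of_gt hlam)
  -- now construct σ
  by_cases hHall : ∀ S : Finset {p // p ∈ s}, S.card ≤ (S.biUnion fun p => Ext p.1).card
  · obtain ⟨f, hfinj, hfmem⟩ := (Finset.all_card_le_biUnion_card_iff_exists_injective _).1 hHall
    refine ⟨fun c => if ∃ p : {p // p ∈ s}, f p = c ∧ p.1 c = m c then true else false, ?_⟩
    intro p hp
    set p' : {p // p ∈ s} := ⟨p, hp⟩ with hp'
    have hc := hfmem p'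
    rw [hExt_mem] at hc
    refine ⟨f p', ?_⟩
    by_cases hpm : p (f p') = m (f p')
    · left
      refine ⟨?_, hpm⟩
      simp only [if_pos (⟨p', rfl, hpm⟩ : ∃ q : {p // p ∈ s}, f q = f p' ∧ q.1 (f p') = m (f p'))]
    · right
      have hpM : p (f p') = M (f p') := hc.resolve_left hpm
      refine ⟨?_, hpM⟩
      have : ¬∃ q : {p // p ∈ s}, f q = f p' ∧ q.1 (f p') = m (f p') := by
        rintro ⟨q, hq1, hq2⟩
        rw [hfinj hq1] at hq2
        exact hpm hq2
      simp only [if_neg this]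
  · push_neg at hHall
    obtain ⟨S₀, hS₀⟩ := hHall
    set δ : Finset {p // p ∈ s} → ℤ :=
      fun S => (S.card : ℤ) - ((S.biUnion fun p => Ext p.1).card : ℤ) with hδ
    have hS₀ne : S₀.Nonempty := by
      rw [← Finset.card_pos]
      exact lt_of_le_of_lt (Nat.zero_le _) hS₀
    obtain ⟨T, hTmem, hTmax⟩ := Finset.exists_max_image
      ((Finset.univ : Finset (Finset {p // p ∈ s})).filter (fun S => S.Nonempty)) δ
      ⟨S₀, Finset.mem_filter.2 ⟨Finset.mem_univ _, hS₀ne⟩⟩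
    have hTne : T.Nonempty := (Finset.mem_filter.1 hTmem).2
    have hδT : 1 ≤ δ T := by
      have h1 : 1 ≤ δ S₀ := by
        simp only [hδ]
        omega
      exact le_trans h1 (hTmax S₀ (Finset.mem_filter.2 ⟨Finset.mem_univ _, hS₀ne⟩))
    set VT : Finset (Fin d) := T.biUnion (fun p => Ext p.1) with hVT
    -- there is a point not in T
    have huex : ∃ u : {p // p ∈ s}, u ∉ T := by
      by_contra hall
      push_neg at hall
      have hTuniv : T = Finset.univ := Finset.eq_univ_iff_forall.2 hall
      have hVTuniv : VT = Finset.univ := by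
        refine Finset.eq_univ_iff_forall.2 ?_
        intro c
        obtain ⟨q, hq, hqe⟩ := Finset.exists_mem_eq_inf' hne (fun p => p c)
        refine Finset.mem_biUnion.2 ⟨⟨q, hq⟩, hall _, ?_⟩
        rw [hExt_mem]
        exact Or.inl hqe.symm
      have : δ T = (s.card : ℤ) - (d : ℤ) := by
        have e1 : δ T = (T.card : ℤ) - (VT.card : ℤ) := rfl
        rw [e1, hTuniv, hVTuniv, Finset.card_univ, Finset.card_univ, Fintype.card_coe,
          Fintype.card_fin]
      rw [this] at hδT
      have : (s.card : ℤ) ≤ (d : ℤ) := by exact_mod_cast hcard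
      omega
    obtain ⟨u, huT⟩ := huex
    -- Hall condition for the rest
    have hHall2 : ∀ S2 : Finset {q : {p // p ∈ s} // q ∉ T},
        S2.card ≤ (S2.biUnion fun q => Ext q.1.1 \ VT).card := by
      intro S2
      by_contra hlt
      push_neg at hlt
      set S : Finset {p // p ∈ s} := S2.image Subtype.val with hS
      have hScard : S.card = S2.card := Finset.card_image_of_injective _ Subtype.val_injective
      have hdisj : Disjoint T S := by
        rw [Finset.disjoint_right]
        intro a haS haT
        obtain ⟨q, -, rfl⟩ := Finset.mem_image.1 haS
        exact q.2 haT
      have hBrel : S.biUnion (fun p => Ext p.1) \ VT = S2.biUnion (fun q => Ext q.1.1 \ VT) := by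
        ext c
        simp only [Finset.mem_sdiff, Finset.mem_biUnion, hS, Finset.mem_image]
        constructor
        · rintro ⟨⟨p2, ⟨q, hq, rfl⟩, hc⟩, hcVT⟩
          exact ⟨q, hq, hc, hcVT⟩
        · rintro ⟨q, hq, hc1, hc2⟩
          exact ⟨⟨q.1, ⟨q, hq, rfl⟩, hc1⟩, hc2⟩
      have hSne : S.Nonempty := by
        rw [← Finset.card_pos, hScard]
        exact lt_of_le_of_lt (Nat.zero_le _) hlt
      have hTS : (T ∪ S).Nonempty := hTne.mono Finset.subset_union_left
      have hmax2 := hTmax (T ∪ S) (Finset.mem_filter.2 ⟨Finset.mem_univ _, hTS⟩)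
      -- compute δ (T ∪ S)
      have hcardTS : (T ∪ S).card = T.card + S.card := Finset.card_union_of_disjoint hdisj
      have hBU : (T ∪ S).biUnion (fun p => Ext p.1) = VT ∪ S.biUnion (fun p => Ext p.1) := by
        ext c
        simp only [Finset.mem_biUnion, Finset.mem_union, hVT]
        constructor
        · rintro ⟨p2, hp2 | hp2, hc⟩
          · exact Or.inl ⟨p2, hp2, hc⟩
          · exact Or.inr ⟨p2, hp2, hc⟩
        · rintro (⟨p2, hp2, hc⟩ | ⟨p2, hp2, hc⟩)
          · exact ⟨p2, Or.inl hp2, hc⟩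
          · exact ⟨p2, Or.inr hp2, hc⟩
      have hcardBU : ((T ∪ S).biUnion (fun p => Ext p.1)).card
          ≤ VT.card + (S.biUnion (fun p => Ext p.1) \ VT).card := by
        rw [hBU, Finset.union_comm, ← Finset.card_sdiff_add_card]
        omega
      have hlt2 : (S.biUnion (fun p => Ext p.1) \ VT).card < S.card := by
        rw [hBrel, hScard]
        exact hlt
      have : δ T < δ (T ∪ S) := by
        simp only [hδ, ← hVT]
        rw [hcardTS]
        push_cast
        have h1 : (((T ∪ S).biUnion fun p => Ext p.1).card : ℤ)
            ≤ (VT.card : ℤ) + ((S.biUnion (fun p => Ext p.1) \ VT).card : ℤ) := by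
          exact_mod_cast hcardBU
        have h2 : ((S.biUnion (fun p => Ext p.1) \ VT).card : ℤ) < (S.card : ℤ) := by
          exact_mod_cast hlt2
        omega
      omega
    obtain ⟨g, hginj, hgmem⟩ := (Finset.all_card_le_biUnion_card_iff_exists_injective _).1 hHall2
    refine ⟨fun c => if c ∈ VT then (if u.1 c = m c then false else true)
      else (if ∃ q : {q : {p // p ∈ s} // q ∉ T}, g q = c ∧ q.1.1 c = m c then true else false), ?_⟩
    intro p hp
    set p' : {p // p ∈ s} := ⟨p, hp⟩ with hp'
    by_cases hpT : p' ∈ T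
    · have hup : u.1 ≠ p := by
        intro h
        apply huT
        have : u = p' := Subtype.ext h
        rw [this]; exact hpT
      obtain ⟨c, hcase⟩ := hwit u.1 u.2 p hp hup
      have hcVT : c ∈ VT := by
        refine Finset.mem_biUnion.2 ⟨p', hpT, ?_⟩
        rw [hExt_mem]
        rcases hcase with ⟨-, h2⟩ | ⟨-, h2⟩
        · exact Or.inr h2
        · exact Or.inl h2
      refine ⟨c, ?_⟩
      rcases hcase with ⟨hum, hpM⟩ | ⟨huM, hpm⟩
      · right
        constructor
        · simp only [if_pos hcVT, if_pos hum]
        · exact hpM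
      · by_cases hum : u.1 c = m c
        · right
          constructor
          · simp only [if_pos hcVT, if_pos hum]
          · rw [hpm, ← hum, huM]
        · left
          constructor
          · simp only [if_pos hcVT, if_neg hum]
          · exact hpm
    · set q' : {q : {p // p ∈ s} // q ∉ T} := ⟨p', hpT⟩ with hq'
      have hc := hgmem q'
      rw [Finset.mem_sdiff, hExt_mem] at hc
      obtain ⟨hcE, hcVT⟩ := hc
      refine ⟨g q', ?_⟩
      by_cases hpm : p (g q') = m (g q')
      · left
        constructor
        · simp only [if_neg hcVT, if_pos (⟨q', rfl, hpm⟩ :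
            ∃ q2 : {q : {p // p ∈ s} // q ∉ T}, g q2 = g q' ∧ q2.1.1 (g q') = m (g q'))]
        · exact hpm
      · right
        constructor
        · have hnex : ¬∃ q2 : {q : {p // p ∈ s} // q ∉ T}, g q2 = g q' ∧ q2.1.1 (g q') = m (g q') := by
            rintro ⟨q2, hq1, hq2⟩
            rw [hginj hq1] at hq2
            exact hpm hq2
          simp only [if_neg hcVT, if_neg hnex]
        · exact hcE.resolve_left hpm


end Stmt1

/-- For every `d ≥ 1`, the minimum cardinality of a maximal equilateral
set in `ℓ_∞^d` (i.e. `Fin d → ℝ` with the sup norm) equals `d + 1`: there is a maximal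
equilateral set of cardinality `d + 1`, and every maximal equilateral set has at least
`d + 1` elements. -/
theorem statement1 (d : ℕ) (hd : 1 ≤ d) :
    (∃ A : Set (Fin d → ℝ), MaximalEquilateral A ∧ A.Finite ∧ A.ncard = d + 1) ∧
    ∀ A : Set (Fin d → ℝ), MaximalEquilateral A → A.Finite → d + 1 ≤ A.ncard := by
  have hd0 : 0 < d := hd
  constructor
  · refine ⟨Stmt1.Amax d, ⟨⟨2, by norm_num, Stmt1.Amax_pairwise⟩, ?_⟩,
      Stmt1.Amax_finite, Stmt1.Amax_ncard⟩
    intro B hB hAB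
    by_contra hBA
    have hnsub : ¬ B ⊆ Stmt1.Amax d := fun h => hBA (Set.Subset.antisymm h hAB)
    obtain ⟨x, hxB, hxA⟩ := Set.not_subset.1 hnsub
    obtain ⟨mu, hmu, hBpw⟩ := hB
    set c0 : Fin d := ⟨0, hd0⟩ with hc0
    have h0A : (0 : Fin d → ℝ) ∈ Stmt1.Amax d := Set.mem_insert _ _
    have hp0A : Stmt1.pt c0 ∈ Stmt1.Amax d := Set.mem_insert_of_mem _ ⟨c0, rfl⟩
    have h0ne : (0 : Fin d → ℝ) ≠ Stmt1.pt c0 := by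
      intro h
      have := congrFun h c0
      rw [Stmt1.pt_self] at this
      norm_num at this
    have hmu2 : mu = 2 := by
      have h2 : ‖(0 : Fin d → ℝ) - Stmt1.pt c0‖ = mu := hBpw (hAB h0A) (hAB hp0A) h0ne
      rw [Stmt1.dist_pt_zero] at h2
      exact h2.symm
    have hx2 : ∀ a ∈ Stmt1.Amax d, ‖x - a‖ = 2 := by
      intro a ha
      have hxa : x ≠ a := fun h => hxA (h ▸ ha)
      have h2 : ‖x - a‖ = mu := hBpw hxB (hAB ha) hxa
      rw [hmu2] at h2
      exact h2
    exact Stmt1.Amax_no_extension hd0 x hx2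
  · intro A hmax hfin
    by_contra hcon
    push_neg at hcon
    have hcard : A.ncard ≤ d := Nat.lt_succ_iff.1 hcon
    rcases A.eq_empty_or_nonempty with rfl | hAne
    · have h1 : Equilateral ({0} : Set (Fin d → ℝ)) :=
        ⟨1, one_pos, Set.pairwise_singleton _ _⟩
      have := hmax.2 {0} h1 (Set.empty_subset _)
      exact Set.singleton_ne_empty _ this
    · obtain ⟨lam, hlam, hpw⟩ := hmax.1
      have hsne : hfin.toFinset.Nonempty := by
        rw [Set.Finite.toFinset_nonempty]
        exact hAne
      have hscard : hfin.toFinset.card ≤ d := by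
        rw [← Set.ncard_eq_toFinset_card A hfin]
        exact hcard
      have hpw' : (↑hfin.toFinset : Set (Fin d → ℝ)).Pairwise fun x y => ‖x - y‖ = lam := by
        rwa [Set.Finite.coe_toFinset]
      obtain ⟨x, hxs, hxd⟩ := Stmt1.extend hd0 hfin.toFinset hsne hscard hlam hpw'
      have hxA : x ∉ A := by
        intro h
        exact hxs ((Set.Finite.mem_toFinset hfin).2 h)
      have hBeq : Equilateral (insert x A) := by
        refine ⟨lam, hlam, ?_⟩
        intro a ha b hb hab
        rcases ha with rfl | ha
        · rcases hb with rfl | hb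
          · exact absurd rfl hab
          · exact hxd b ((Set.Finite.mem_toFinset hfin).2 hb)
        · rcases hb with rfl | hb
          · rw [← norm_neg, neg_sub]
            exact hxd a ((Set.Finite.mem_toFinset hfin).2 ha)
          · exact hpw ha hb hab
      have heq := hmax.2 _ hBeq (Set.subset_insert _ _)
      exact hxA (heq ▸ Set.mem_insert x A)
end

section
/- Let d ≥ 1 and let A ⊆ ℓ_∞^d be an equilateral set with 1 ≤ |A| ≤ d. Then A is not maximal: there exists a point q ∈ ℓ_∞^d with q ∉ A such that A ∪ {q} is equilateral. Consequently m(ℓ_∞^d) ≥ d+1. -/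
namespace Statement2Aux

open Finset

variable {d : ℕ}

/-- Coverage of a pattern `p` by a side-choice `T` (coords in `T` use the "high" side),
relative to a coordinate set `J`. -/
def Cov (J : Finset (Fin d)) (T : Finset (Fin d)) (p : Fin d → ℤ) : Prop :=
  ∃ i ∈ J, (p i = 0 ∧ i ∉ T) ∨ (p i = 2 ∧ i ∈ T)

instance (J T : Finset (Fin d)) (p : Fin d → ℤ) : Decidable (Cov J T p) := by
  unfold Cov; infer_instance

/-- Coordinates of `J` where the pattern `p` is extremal. -/
def Kset (J : Finset (Fin d)) (p : Fin d → ℤ) : Finset (Fin d) :=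
  J.filter (fun i => p i = 0 ∨ p i = 2)

/-- Side-choices that fail to cover `p`. -/
def Kill (J : Finset (Fin d)) (p : Fin d → ℤ) : Finset (Finset (Fin d)) :=
  Finset.univ.filter (fun T => ¬ Cov J T p)

/-- Active coordinates of a family. -/
def Act (J : Finset (Fin d)) (P : Finset (Fin d → ℤ)) : Finset (Fin d) :=
  J.filter (fun i => ∃ p ∈ P, p i = 0 ∨ p i = 2)

lemma card_agree (C : Finset (Fin d)) (f : Fin d → Prop) [DecidablePred f] :
    (Finset.univ.filter (fun T : Finset (Fin d) => ∀ i ∈ C, (i ∈ T ↔ f i))).card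
      = 2 ^ (d - C.card) := by
  have hcard : ((Finset.univ : Finset (Fin d)) \ C).powerset.card = 2 ^ (d - C.card) := by
    rw [card_powerset, card_sdiff_of_subset (subset_univ C), card_univ, Fintype.card_fin]
  rw [← hcard]
  apply card_bij (fun T _ => T \ C)
  · intro T hT
    rw [mem_powerset]
    exact sdiff_subset_sdiff (subset_univ T) le_rfl
  · intro T1 h1 T2 h2 heq
    simp only [mem_filter, mem_univ, true_and] at h1 h2
    ext i
    by_cases hi : i ∈ C
    · rw [h1 i hi, h2 i hi]
    · have := Finset.ext_iff.mp heq i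
      simpa [mem_sdiff, hi] using this
  · intro t ht
    rw [mem_powerset] at ht
    have htC : ∀ i ∈ t, i ∉ C := fun i hi => (mem_sdiff.mp (ht hi)).2
    refine ⟨t ∪ C.filter f, ?_, ?_⟩
    · simp only [mem_filter, mem_univ, true_and]
      intro i hi
      have hit : i ∉ t := fun h => htC i h hi
      simp [mem_union, mem_filter, hit, hi]
    · ext i
      by_cases hi : i ∈ C <;> by_cases hit : i ∈ t
      · exact absurd hi (htC i hit)
      · simp [mem_sdiff, mem_union, mem_filter, hi, hit]
      · simp [mem_sdiff, mem_union, mem_filter, hi, hit]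
      · simp [mem_sdiff, mem_union, mem_filter, hi, hit]

lemma not_cov_iff (J T : Finset (Fin d)) (p : Fin d → ℤ) :
    ¬ Cov J T p ↔ ∀ i ∈ Kset J p, (i ∈ T ↔ p i = 0) := by
  unfold Cov Kset
  constructor
  · intro h i hi
    rw [mem_filter] at hi
    obtain ⟨hiJ, h02⟩ := hi
    constructor
    · intro hiT
      by_contra h0
      rcases h02 with h02 | h02
      · exact h0 h02
      · exact h ⟨i, hiJ, Or.inr ⟨h02, hiT⟩⟩
    · intro h0
      by_contra hiT
      exact h ⟨i, hiJ, Or.inl ⟨h0, hiT⟩⟩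
  · rintro h ⟨i, hiJ, hc⟩
    rcases hc with ⟨h0, hiT⟩ | ⟨h2, hiT⟩
    · exact hiT ((h i (by simp [mem_filter, hiJ, h0])).mpr h0)
    · have := (h i (by simp [mem_filter, hiJ, h2])).mp hiT
      omega

lemma kill_card (J : Finset (Fin d)) (p : Fin d → ℤ) :
    (Kill J p).card = 2 ^ (d - (Kset J p).card) := by
  unfold Kill
  rw [filter_congr (fun T _ => not_cov_iff J T p)]
  exact card_agree _ _

lemma card_agree_two (C1 C2 : Finset (Fin d)) (hdisj : Disjoint C1 C2)
    (f1 f2 : Fin d → Prop) [DecidablePred f1] [DecidablePred f2] :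
    (Finset.univ.filter (fun T : Finset (Fin d) =>
      (∀ i ∈ C1, (i ∈ T ↔ f1 i)) ∧ (∀ i ∈ C2, (i ∈ T ↔ f2 i)))).card
      = 2 ^ (d - C1.card - C2.card) := by
  have key : ∀ T : Finset (Fin d),
      ((∀ i ∈ C1, (i ∈ T ↔ f1 i)) ∧ (∀ i ∈ C2, (i ∈ T ↔ f2 i))) ↔
      (∀ i ∈ C1 ∪ C2, (i ∈ T ↔ (if i ∈ C1 then f1 i else f2 i))) := by
    intro T
    constructor
    · rintro ⟨h1, h2⟩ i hi
      by_cases hic : i ∈ C1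
      · simpa [hic] using h1 i hic
      · have hi2 : i ∈ C2 := by
          rcases mem_union.mp hi with h | h
          · exact absurd h hic
          · exact h
        simpa [hic] using h2 i hi2
    · intro h
      constructor
      · intro i hi
        simpa [hi] using h i (mem_union_left _ hi)
      · intro i hi
        have hic : i ∉ C1 := fun hc => (disjoint_left.mp hdisj hc) hi
        simpa [hic] using h i (mem_union_right _ hi)
  rw [filter_congr (fun T _ => key T), card_agree (C1 ∪ C2) _,
    card_union_of_disjoint hdisj, Nat.sub_sub]

lemma core : ∀ (n : ℕ) (P : Finset (Fin d → ℤ)) (J : Finset (Fin d)), P.card ≤ n →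
    (∀ x ∈ P, ∀ y ∈ P, x ≠ y → ∃ i ∈ J, (x i = 0 ∧ y i = 2) ∨ (x i = 2 ∧ y i = 0)) →
    (∀ T : Finset (Fin d), ∃ p ∈ P, ¬ Cov J T p) →
    (Act J P).card + 1 ≤ P.card := by
  intro n
  induction n with
  | zero =>
    intro P J hcard _ hunsat
    obtain ⟨p, hp, _⟩ := hunsat ∅
    rw [Finset.card_eq_zero.mp (Nat.le_zero.mp hcard)] at hp
    exact absurd hp (notMem_empty p)
  | succ n ih =>
    intro P J hPn hclash hunsat
    by_contra hcon
    push_neg at hcon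
    have hn : P.card ≤ (Act J P).card := by omega
    obtain ⟨p0, hp0, _⟩ := hunsat ∅
    have hPne : P.Nonempty := ⟨p0, hp0⟩
    have hActne : (Act J P).Nonempty := by
      rw [← card_pos]
      calc 1 ≤ P.card := card_pos.mpr hPne
        _ ≤ _ := hn
    -- the side sets
    set AS : Fin d → ℤ → Finset (Fin d → ℤ) := fun i s => P.filter (fun p => p i = s) with hAS
    set cand : Finset (Fin d × ℤ) :=
      (J ×ˢ ({0, 2} : Finset ℤ)).filter (fun q => (AS q.1 q.2).Nonempty) with hcand
    have hcandne : cand.Nonempty := by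
      obtain ⟨i, hi⟩ := hActne
      rw [Act, mem_filter] at hi
      obtain ⟨hiJ, q, hq, hq02⟩ := hi
      refine ⟨⟨i, q i⟩, ?_⟩
      rw [hcand, mem_filter, mem_product]
      refine ⟨⟨hiJ, ?_⟩, ⟨q, ?_⟩⟩
      · simp only [mem_insert, mem_singleton]
        exact hq02
      · rw [hAS]
        exact mem_filter.mpr ⟨hq, rfl⟩
    obtain ⟨⟨istar, sstar⟩, hmemc, hmin⟩ :=
      Finset.exists_min_image cand (fun q => (AS q.1 q.2).card) hcandne
    have hmemc' := hmemc
    rw [hcand, mem_filter, mem_product] at hmemc'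
    obtain ⟨⟨histarJ, hsstar02'⟩, hAstarne⟩ := hmemc'
    have hsstar02 : sstar = 0 ∨ sstar = 2 := by
      simpa using hsstar02'
    -- the dead-count sublemma
    have deadcount : ∀ i s, i ∈ J → (s = 0 ∨ s = 2) → (AS i s).Nonempty →
        (AS i s).card ≤ (((Act J P).erase i).filter
          (fun j => ∀ p ∈ P, ¬ p i = s → ¬(p j = 0 ∨ p j = 2))).card := by
      intro i s hiJ hs02 hASne
      set P' := P.filter (fun p => ¬ p i = s) with hP'
      set J' := J.erase i with hJ'
      have hclash' : ∀ x ∈ P', ∀ y ∈ P', x ≠ y →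
          ∃ j ∈ J', (x j = 0 ∧ y j = 2) ∨ (x j = 2 ∧ y j = 0) := by
        intro x hx y hy hxy
        rw [hP', mem_filter] at hx hy
        obtain ⟨j, hjJ, hj⟩ := hclash x hx.1 y hy.1 hxy
        refine ⟨j, mem_erase.mpr ⟨?_, hjJ⟩, hj⟩
        rintro rfl
        rcases hs02 with rfl | rfl
        · rcases hj with ⟨h1, _⟩ | ⟨_, h2⟩
          · exact hx.2 h1
          · exact hy.2 h2
        · rcases hj with ⟨_, h2⟩ | ⟨h1, _⟩
          · exact hy.2 h2
          · exact hx.2 h1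
      have hunsat' : ∀ T : Finset (Fin d), ∃ p ∈ P', ¬ Cov J' T p := by
        intro T'
        set T := if s = 2 then insert i T' else T'.erase i with hT
        obtain ⟨p, hp, hpc⟩ := hunsat T
        have hpi : ¬ p i = s := by
          intro hpis
          apply hpc
          rcases hs02 with rfl | rfl
          · refine ⟨i, hiJ, Or.inl ⟨hpis, ?_⟩⟩
            rw [hT]
            simp
          · refine ⟨i, hiJ, Or.inr ⟨hpis, ?_⟩⟩
            rw [hT]
            simp
        refine ⟨p, mem_filter.mpr ⟨hp, hpi⟩, ?_⟩
        rintro ⟨j, hjJ', hcov⟩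
        have hji : j ≠ i := (mem_erase.mp hjJ').1
        have hjJ : j ∈ J := (mem_erase.mp hjJ').2
        have hTmem : j ∈ T ↔ j ∈ T' := by
          by_cases h2 : s = 2 <;> simp [hT, h2, hji]
        apply hpc
        refine ⟨j, hjJ, ?_⟩
        rcases hcov with ⟨h0, hjT⟩ | ⟨h2, hjT⟩
        · exact Or.inl ⟨h0, fun hmem => hjT (hTmem.mp hmem)⟩
        · exact Or.inr ⟨h2, hTmem.mpr hjT⟩
      have hsplit : (AS i s).card + P'.card = P.card := by
        rw [hAS, hP']
        exact card_filter_add_card_filter_not _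
      have hone : 1 ≤ (AS i s).card := card_pos.mpr hASne
      have hIH := ih P' J' (by omega) hclash' hunsat'
      set Dead := ((Act J P).erase i).filter
          (fun j => ∀ p ∈ P, ¬ p i = s → ¬(p j = 0 ∨ p j = 2)) with hDead
      have hsub : Act J P ⊆ insert i ((Act J' P') ∪ Dead) := by
        intro j hj
        have hj' := hj
        rw [Act, mem_filter] at hj'
        obtain ⟨hjJ, q, hqP, hq02⟩ := hj'
        rcases eq_or_ne j i with rfl | hji
        · exact mem_insert_self _ _
        apply mem_insert_of_mem
        by_cases hact : ∃ p ∈ P', p j = 0 ∨ p j = 2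
        · obtain ⟨p, hp, h02⟩ := hact
          apply mem_union_left
          rw [Act, mem_filter]
          exact ⟨mem_erase.mpr ⟨hji, hjJ⟩, p, hp, h02⟩
        · push_neg at hact
          apply mem_union_right
          rw [hDead, mem_filter]
          refine ⟨mem_erase.mpr ⟨hji, hj⟩, ?_⟩
          intro p hp hpi h02
          have hcon2 := hact p (mem_filter.mpr ⟨hp, hpi⟩)
          rcases h02 with h | h
          · exact hcon2.1 h
          · exact hcon2.2 h
      have hcards : (Act J P).card ≤ (Act J' P').card + Dead.card + 1 := by
        have h1 : (Act J P).card ≤ (insert i ((Act J' P') ∪ Dead)).card := card_le_card hsub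
        have h2 : (insert i ((Act J' P') ∪ Dead)).card ≤ ((Act J' P') ∪ Dead).card + 1 :=
          card_insert_le _ _
        have h3 := card_union_le (Act J' P') Dead
        omega
      omega
    -- instantiate at the minimizer
    set D := ((Act J P).erase istar).filter
        (fun j => ∀ p ∈ P, ¬ p istar = sstar → ¬(p j = 0 ∨ p j = 2)) with hD
    have hDge : (AS istar sstar).card ≤ D.card :=
      deadcount istar sstar histarJ hsstar02 hAstarne
    have hDne : D.Nonempty := by
      rw [← card_pos]
      calc 1 ≤ (AS istar sstar).card := card_pos.mpr hAstarne
        _ ≤ D.card := hDge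
    -- structure of dead coordinates
    have hsides : ∀ j ∈ D, ∀ p ∈ AS istar sstar,
        ((AS j 2).Nonempty → p j = 2) ∧ (¬(AS j 2).Nonempty → p j = 0) := by
      intro j hj p hp
      have hjD := hj
      rw [hD, mem_filter] at hjD
      obtain ⟨hjerase, hjdead⟩ := hjD
      have hjAct : j ∈ Act J P := mem_of_mem_erase hjerase
      have hjActm := hjAct
      rw [Act, mem_filter] at hjActm
      obtain ⟨hjJ, q, hqP, hq02⟩ := hjActm
      have hall : ∀ r ∈ P, (r j = 0 ∨ r j = 2) → r istar = sstar := by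
        intro r hr h02
        by_contra hne
        exact hjdead r hr hne h02
      have key : ∀ s', (s' = 0 ∨ s' = 2) → (AS j s').Nonempty → AS j s' = AS istar sstar := by
        intro s' hs' hne
        apply eq_of_subset_of_card_le
        · intro r hr
          rw [hAS, mem_filter] at hr ⊢
          refine ⟨hr.1, hall r hr.1 ?_⟩
          rcases hs' with rfl | rfl
          · exact Or.inl hr.2
          · exact Or.inr hr.2
        · refine hmin ⟨j, s'⟩ ?_
          rw [hcand, mem_filter, mem_product]
          refine ⟨⟨hjJ, ?_⟩, hne⟩
          simp only [mem_insert, mem_singleton]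
          exact hs'
      constructor
      · intro hne2
        have heq := key 2 (Or.inr rfl) hne2
        have hpmem : p ∈ AS j 2 := heq ▸ hp
        rw [hAS, mem_filter] at hpmem
        exact hpmem.2
      · intro hne2
        have hq0 : q j = 0 := by
          rcases hq02 with h | h
          · exact h
          · exact absurd ⟨q, by rw [hAS]; exact mem_filter.mpr ⟨hqP, h⟩⟩ hne2
        have heq := key 0 (Or.inl rfl) ⟨q, by rw [hAS]; exact mem_filter.mpr ⟨hqP, hq0⟩⟩
        have hpmem : p ∈ AS j 0 := heq ▸ hp
        rw [hAS, mem_filter] at hpmem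
        exact hpmem.2
    have hDJ : ∀ j ∈ D, j ∈ J := by
      intro j hj
      rw [hD, mem_filter] at hj
      have := mem_of_mem_erase hj.1
      rw [Act, mem_filter] at this
      exact this.1
    -- final counting
    set S : Finset (Finset (Fin d)) :=
      Finset.univ.filter (fun T => ∀ j ∈ D, (j ∈ T ↔ (AS j 2).Nonempty)) with hS
    have hScard : S.card = 2 ^ (d - D.card) := card_agree D _
    set P' := P.filter (fun p => ¬ p istar = sstar) with hP'
    have hcover : S ⊆ P'.biUnion (fun p => Kill J p ∩ S) := by
      intro T hT
      obtain ⟨p, hp, hpc⟩ := hunsat T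
      have hpP' : p ∈ P' := by
        rw [hP', mem_filter]
        refine ⟨hp, fun hpis => ?_⟩
        obtain ⟨j0, hj0⟩ := hDne
        have hpA : p ∈ AS istar sstar := by
          rw [hAS]; exact mem_filter.mpr ⟨hp, hpis⟩
        have hsj := hsides j0 hj0 p hpA
        have hTS := hT
        rw [hS, mem_filter] at hTS
        have hTiff : j0 ∈ T ↔ (AS j0 2).Nonempty := hTS.2 j0 hj0
        apply hpc
        by_cases h2 : (AS j0 2).Nonempty
        · exact ⟨j0, hDJ j0 hj0, Or.inr ⟨hsj.1 h2, hTiff.mpr h2⟩⟩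
        · exact ⟨j0, hDJ j0 hj0, Or.inl ⟨hsj.2 h2, fun hT0 => h2 (hTiff.mp hT0)⟩⟩
      refine mem_biUnion.mpr ⟨p, hpP', mem_inter.mpr ⟨?_, hT⟩⟩
      rw [Kill, mem_filter]
      exact ⟨mem_univ _, hpc⟩
    have hKS : ∀ p ∈ P', (Kill J p ∩ S).card = 2 ^ (d - (Kset J p).card - D.card) := by
      intro p hp
      rw [hP', mem_filter] at hp
      have hdisj : Disjoint (Kset J p) D := by
        rw [disjoint_left]
        intro j hjK hjD
        have hjD' := hjD
        rw [hD, mem_filter] at hjD'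
        have : ¬ (p j = 0 ∨ p j = 2) := hjD'.2 p hp.1 hp.2
        rw [Kset, mem_filter] at hjK
        exact this hjK.2
      have heq : Kill J p ∩ S = Finset.univ.filter (fun T =>
          (∀ i ∈ Kset J p, (i ∈ T ↔ p i = 0)) ∧ (∀ j ∈ D, (j ∈ T ↔ (AS j 2).Nonempty))) := by
        ext T
        rw [mem_inter, Kill, hS]
        simp only [mem_filter, mem_univ, true_and]
        rw [not_cov_iff]
      rw [heq, card_agree_two (Kset J p) D hdisj]
    have hsum1 : ∑ p ∈ P, (Kill J p).card = 2 ^ d := by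
      have hdisjk : ∀ x ∈ P, ∀ y ∈ P, x ≠ y → Disjoint (Kill J x) (Kill J y) := by
        intro x hx y hy hxy
        obtain ⟨i, hiJ, hi⟩ := hclash x hx y hy hxy
        rw [disjoint_left]
        intro T hTx hTy
        rw [Kill, mem_filter] at hTx hTy
        have hx0 := (not_cov_iff J T x).mp hTx.2
        have hy0 := (not_cov_iff J T y).mp hTy.2
        rcases hi with ⟨h0, h2⟩ | ⟨h2, h0⟩
        · have hiKx : i ∈ Kset J x := by rw [Kset, mem_filter]; exact ⟨hiJ, Or.inl h0⟩
          have hiKy : i ∈ Kset J y := by rw [Kset, mem_filter]; exact ⟨hiJ, Or.inr h2⟩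
          have hxT : i ∈ T := (hx0 i hiKx).mpr h0
          have hyT := (hy0 i hiKy).mp hxT
          omega
        · have hiKx : i ∈ Kset J x := by rw [Kset, mem_filter]; exact ⟨hiJ, Or.inr h2⟩
          have hiKy : i ∈ Kset J y := by rw [Kset, mem_filter]; exact ⟨hiJ, Or.inl h0⟩
          have hyT : i ∈ T := (hy0 i hiKy).mpr h0
          have hxT := (hx0 i hiKx).mp hyT
          omega
      have hbu : P.biUnion (fun p => Kill J p) = Finset.univ := by
        apply Finset.eq_univ_of_forall
        intro T
        obtain ⟨p, hp, hpc⟩ := hunsat T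
        refine mem_biUnion.mpr ⟨p, hp, ?_⟩
        rw [Kill, mem_filter]
        exact ⟨mem_univ _, hpc⟩
      calc ∑ p ∈ P, (Kill J p).card
          = (P.biUnion (fun p => Kill J p)).card := (card_biUnion hdisjk).symm
        _ = 2 ^ d := by rw [hbu, card_univ, Fintype.card_finset, Fintype.card_fin]
    have hineq : 2 ^ (d - D.card) ≤ ∑ p ∈ P', 2 ^ (d - (Kset J p).card - D.card) := by
      calc 2 ^ (d - D.card) = S.card := hScard.symm
        _ ≤ (P'.biUnion fun p => Kill J p ∩ S).card := card_le_card hcover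
        _ ≤ ∑ p ∈ P', (Kill J p ∩ S).card := card_biUnion_le
        _ = _ := Finset.sum_congr rfl hKS
    have hexp : ∀ p ∈ P', (Kset J p).card + D.card ≤ d := by
      intro p hp
      rw [hP', mem_filter] at hp
      have hdisj : Disjoint (Kset J p) D := by
        rw [disjoint_left]
        intro j hjK hjD
        have hjD' := hjD
        rw [hD, mem_filter] at hjD'
        have hnact : ¬ (p j = 0 ∨ p j = 2) := hjD'.2 p hp.1 hp.2
        rw [Kset, mem_filter] at hjK
        exact hnact hjK.2
      calc (Kset J p).card + D.card = (Kset J p ∪ D).card := (card_union_of_disjoint hdisj).symm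
        _ ≤ (univ : Finset (Fin d)).card := card_le_univ _
        _ = d := by rw [card_univ, Fintype.card_fin]
    have hDd : D.card ≤ d := by
      calc D.card ≤ (univ : Finset (Fin d)).card := card_le_univ _
        _ = d := by rw [card_univ, Fintype.card_fin]
    have hsum2 : 2 ^ d ≤ ∑ p ∈ P', (Kill J p).card := by
      have heq2 : ∑ p ∈ P', (Kill J p).card
          = (∑ p ∈ P', 2 ^ (d - (Kset J p).card - D.card)) * 2 ^ D.card := by
        rw [Finset.sum_mul]
        refine Finset.sum_congr rfl ?_
        intro p hp
        rw [kill_card, ← pow_add]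
        congr 1
        have := hexp p hp
        omega
      rw [heq2]
      calc 2 ^ d = 2 ^ (d - D.card) * 2 ^ D.card := by
            rw [← pow_add]
            congr 1
            omega
        _ ≤ _ := Nat.mul_le_mul_right _ hineq
    have hsplitsum : ∑ p ∈ AS istar sstar, (Kill J p).card + ∑ p ∈ P', (Kill J p).card
        = ∑ p ∈ P, (Kill J p).card := by
      rw [hAS, hP']
      exact Finset.sum_filter_add_sum_filter_not P _ _
    have hposA : 0 < ∑ p ∈ AS istar sstar, (Kill J p).card := by
      refine Finset.sum_pos ?_ hAstarne
      intro p _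
      rw [kill_card]
      exact pow_pos (by norm_num) _
    omega

lemma abstract_sat (P : Finset (Fin d → ℤ)) (J : Finset (Fin d))
    (hclash : ∀ x ∈ P, ∀ y ∈ P, x ≠ y → ∃ i ∈ J, (x i = 0 ∧ y i = 2) ∨ (x i = 2 ∧ y i = 0))
    (hcard : P.card ≤ (Act J P).card) :
    ∃ T : Finset (Fin d), ∀ p ∈ P, Cov J T p := by
  by_contra h
  push_neg at h
  have hcore := core P.card P J le_rfl hclash (fun T => h T)
  omega

lemma extend_lemma (d : ℕ) (hd : 1 ≤ d) (A : Set (Fin d → ℝ)) (lam : ℝ)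
    (hA : EquilateralWith A lam) (hfin : A.Finite) (h1 : 1 ≤ A.ncard) (h2 : A.ncard ≤ d) :
    ∃ q : Fin d → ℝ, q ∉ A ∧ EquilateralWith (A ∪ {q}) lam := by
  classical
  obtain ⟨hlam, hpair⟩ := hA
  set s : Finset (Fin d → ℝ) := hfin.toFinset with hs
  have hmem : ∀ x, x ∈ s ↔ x ∈ A := fun x => hfin.mem_toFinset
  have hscard : s.card = A.ncard := (Set.ncard_eq_toFinset_card A hfin).symm
  have hsne : s.Nonempty := by
    rw [← card_pos, hscard]; omega
  set m : Fin d → ℝ := fun i => s.inf' hsne (fun x => x i) with hm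
  set M : Fin d → ℝ := fun i => s.sup' hsne (fun x => x i) with hM
  have hmle : ∀ i, ∀ x ∈ s, m i ≤ x i := fun i x hx => inf'_le (fun y => y i) hx
  have hMle : ∀ i, ∀ x ∈ s, x i ≤ M i := fun i x hx => le_sup' (fun y => y i) hx
  have hdist : ∀ x ∈ s, ∀ y ∈ s, x ≠ y → ‖x - y‖ = lam := by
    intro x hx y hy hxy
    exact hpair ((hmem x).mp hx) ((hmem y).mp hy) hxy
  have habs : ∀ x ∈ s, ∀ y ∈ s, ∀ i, |x i - y i| ≤ lam := by
    intro x hx y hy i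
    rcases eq_or_ne x y with rfl | hxy
    · simpa using hlam.le
    · calc |x i - y i| = ‖(x - y) i‖ := by simp [Real.norm_eq_abs]
        _ ≤ ‖x - y‖ := norm_le_pi_norm _ i
        _ = lam := hdist x hx y hy hxy
  have hMm : ∀ i, M i - m i ≤ lam := by
    intro i
    obtain ⟨x, hx, hxM⟩ := exists_mem_eq_sup' hsne (fun x => x i)
    obtain ⟨y, hy, hym⟩ := exists_mem_eq_inf' hsne (fun x => x i)
    have h1' : M i = x i := hxM
    have h2' : m i = y i := hym
    calc M i - m i = x i - y i := by rw [h1', h2']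
      _ ≤ |x i - y i| := le_abs_self _
      _ ≤ lam := habs x hx y hy i
  -- helper: exact norm via coordinates
  have hnormeq : ∀ (q x : Fin d → ℝ), (∀ j, |q j - x j| ≤ lam) → (∃ j, |q j - x j| = lam) →
      ‖q - x‖ = lam := by
    rintro q x hle ⟨j, hj⟩
    apply le_antisymm
    · rw [pi_norm_le_iff_of_nonneg hlam.le]
      intro i
      simpa [Real.norm_eq_abs] using hle i
    · calc lam = |q j - x j| := hj.symm
        _ = ‖(q - x) j‖ := by simp [Real.norm_eq_abs]
        _ ≤ ‖q - x‖ := norm_le_pi_norm _ j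
  -- helper: assemble conclusion
  have hassemble : ∀ q : Fin d → ℝ, (∀ x ∈ A, ‖q - x‖ = lam) →
      q ∉ A ∧ EquilateralWith (A ∪ {q}) lam := by
    intro q hq
    have hqA : q ∉ A := by
      intro hqA
      have h0 := hq q hqA
      simp only [sub_self, norm_zero] at h0
      exact hlam.ne h0
    refine ⟨hqA, hlam, ?_⟩
    rw [Set.union_singleton]
    intro x hx y hy hxy
    rcases Set.mem_insert_iff.mp hx with rfl | hx'
    · rcases Set.mem_insert_iff.mp hy with rfl | hy'
      · exact absurd rfl hxy
      · exact hq y hy'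
    · rcases Set.mem_insert_iff.mp hy with rfl | hy'
      · rw [norm_sub_rev]; exact hq x hx'
      · exact hpair hx' hy' hxy
  by_cases hdeg : ∃ i, M i = m i
  · -- degenerate coordinate: q = m + lam works
    obtain ⟨i0, hdi⟩ := hdeg
    refine ⟨(fun j => m j + lam), hassemble (fun j => m j + lam) ?_⟩
    intro x hxA
    have hx : x ∈ s := (hmem x).mpr hxA
    apply hnormeq
    · intro j
      have hb1 := hmle j x hx
      have hb2 := hMle j x hx
      have hb3 := hMm j
      rw [abs_le]
      constructor <;> [skip; skip] <;> nlinarith [hlam.le]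
    · refine ⟨i0, ?_⟩
      have hb1 := hmle i0 x hx
      have hb2 := hMle i0 x hx
      have hxi : x i0 = m i0 := le_antisymm (hdi ▸ hb2) hb1
      rw [hxi]
      simp [abs_of_nonneg hlam.le]
  · -- nondegenerate: use the combinatorial theorem
    push_neg at hdeg
    have hlt : ∀ i, m i < M i := by
      intro i
      obtain ⟨x, hx⟩ := hsne
      rcases lt_or_eq_of_le (le_trans (hmle i x hx) (hMle i x hx)) with h | h
      · exact h
      · exact absurd h.symm (hdeg i)
    set pat : (Fin d → ℝ) → (Fin d → ℤ) :=
      fun x i => if x i = m i then 0 else if x i = M i then 2 else 1 with hpat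
    have hpat0 : ∀ x i, pat x i = 0 ↔ x i = m i := by
      intro x i
      constructor
      · intro h
        by_contra hne
        simp only [hpat] at h
        rw [if_neg hne] at h
        by_cases h2' : x i = M i
        · rw [if_pos h2'] at h
          exact absurd h (by norm_num)
        · rw [if_neg h2'] at h
          exact absurd h (by norm_num)
      · intro h
        simp only [hpat]
        rw [if_pos h]
    have hpat2 : ∀ x i, pat x i = 2 ↔ (¬ x i = m i ∧ x i = M i) := by
      intro x i
      constructor
      · intro h
        simp only [hpat] at h
        by_cases h1' : x i = m i
        · rw [if_pos h1'] at h
          exact absurd h (by norm_num)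
        · rw [if_neg h1'] at h
          by_cases h2' : x i = M i
          · exact ⟨h1', h2'⟩
          · rw [if_neg h2'] at h
            exact absurd h (by norm_num)
      · rintro ⟨h1', h2'⟩
        simp only [hpat]
        rw [if_neg h1', if_pos h2']
    -- attained coordinate for distinct points
    haveI : Nonempty (Fin d) := ⟨⟨0, hd⟩⟩
    have hattain : ∀ x ∈ s, ∀ y ∈ s, x ≠ y → ∃ i, |x i - y i| = lam := by
      intro x hx y hy hxy
      obtain ⟨i, _, hi⟩ := Finset.exists_mem_eq_sup (Finset.univ : Finset (Fin d))
        univ_nonempty (fun i => ‖(x - y) i‖₊)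
      refine ⟨i, ?_⟩
      have hnorm : ‖x - y‖ = ‖(x - y) i‖ := by
        rw [Pi.norm_def, hi]
        exact coe_nnnorm _
      have := hdist x hx y hy hxy
      rw [hnorm] at this
      simpa [Real.norm_eq_abs] using this
    -- squeeze: i-attained pair gives extremality
    have hsq : ∀ i, ∀ x' ∈ s, ∀ y' ∈ s, y' i - x' i = lam → x' i = m i ∧ y' i = M i := by
      intro i x' hx' y' hy' hdiff
      have hb1 := hmle i x' hx'
      have hb2 := hMle i y' hy'
      have hb3 := hMm i
      have hb4 := hmle i y' hy'
      have hb5 := hMle i x' hx'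
      constructor
      · have : x' i ≤ m i := by linarith
        exact le_antisymm this hb1
      · have : M i ≤ y' i := by linarith
        exact le_antisymm hb2 this
    set P : Finset (Fin d → ℤ) := s.image pat with hP
    have hclash : ∀ a ∈ P, ∀ b ∈ P, a ≠ b →
        ∃ i ∈ Finset.univ, (a i = 0 ∧ b i = 2) ∨ (a i = 2 ∧ b i = 0) := by
      intro a ha b hb hab
      obtain ⟨x, hx, rfl⟩ := mem_image.mp ha
      obtain ⟨y, hy, rfl⟩ := mem_image.mp hb
      have hxy : x ≠ y := fun h => hab (by rw [h])
      obtain ⟨i, hi⟩ := hattain x hx y hy hxy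
      rw [abs_eq hlam.le] at hi
      refine ⟨i, mem_univ i, ?_⟩
      rcases hi with hi | hi
      · -- x i - y i = lam : y min, x max
        have hkey := hsq i y hy x hx (by linarith)
        refine Or.inr ⟨?_, ?_⟩
        · rw [hpat2]
          refine ⟨?_, hkey.2⟩
          intro hxm
          have := hlt i
          rw [← hxm, hkey.2] at this
          exact lt_irrefl _ this
        · rw [hpat0]; exact hkey.1
      · -- y i - x i = lam : x min, y max
        have hkey := hsq i x hx y hy (by linarith)
        refine Or.inl ⟨?_, ?_⟩
        · rw [hpat0]; exact hkey.1
        · rw [hpat2]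
          refine ⟨?_, hkey.2⟩
          intro hym
          have := hlt i
          rw [← hym, hkey.2] at this
          exact lt_irrefl _ this
    have hcardP : P.card = s.card := by
      rw [hP]
      apply card_image_of_injOn
      intro x hx y hy hpxy
      by_contra hxy
      obtain ⟨i, hi⟩ := hattain x (mem_coe.mp hx) y (mem_coe.mp hy) hxy
      rw [abs_eq hlam.le] at hi
      rcases hi with hi | hi
      · have hkey := hsq i y (mem_coe.mp hy) x (mem_coe.mp hx) (by linarith)
        have h1' : pat y i = 0 := (hpat0 y i).mpr hkey.1
        have h2' : pat x i = 2 := by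
          rw [hpat2]
          refine ⟨?_, hkey.2⟩
          intro hxm
          have := hlt i
          rw [← hxm, hkey.2] at this
          exact lt_irrefl _ this
        have := congrFun hpxy i
        omega
      · have hkey := hsq i x (mem_coe.mp hx) y (mem_coe.mp hy) (by linarith)
        have h1' : pat x i = 0 := (hpat0 x i).mpr hkey.1
        have h2' : pat y i = 2 := by
          rw [hpat2]
          refine ⟨?_, hkey.2⟩
          intro hym
          have := hlt i
          rw [← hym, hkey.2] at this
          exact lt_irrefl _ this
        have := congrFun hpxy i
        omega
    have hact : Act Finset.univ P = Finset.univ := by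
      apply Finset.eq_univ_of_forall
      intro i
      rw [Act, mem_filter]
      refine ⟨mem_univ i, ?_⟩
      obtain ⟨x, hx, hxm⟩ := exists_mem_eq_inf' hsne (fun x => x i)
      refine ⟨pat x, mem_image_of_mem pat hx, Or.inl ?_⟩
      rw [hpat0]
      exact hxm.symm
    have hcards : P.card ≤ (Act Finset.univ P).card := by
      rw [hact, hcardP, hscard, card_univ, Fintype.card_fin]
      exact h2
    obtain ⟨T, hT⟩ := abstract_sat P Finset.univ hclash hcards
    refine ⟨(fun i => if i ∈ T then M i - lam else m i + lam), hassemble (fun i => if i ∈ T then M i - lam else m i + lam) ?_⟩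
    intro x hxA
    have hx : x ∈ s := (hmem x).mpr hxA
    apply hnormeq
    · intro j
      have hb1 := hmle j x hx
      have hb2 := hMle j x hx
      have hb3 := hMm j
      split_ifs with hj <;> (rw [abs_le]; constructor <;> linarith)
    · obtain ⟨i, _, hcov⟩ := hT (pat x) (mem_image_of_mem pat hx)
      refine ⟨i, ?_⟩
      rcases hcov with ⟨h0, hiT⟩ | ⟨h2', hiT⟩
      · rw [if_neg hiT, (hpat0 x i).mp h0]
        simp [abs_of_nonneg hlam.le]
      · rw [if_pos hiT, ((hpat2 x i).mp h2').2]
        simp [abs_of_nonneg hlam.le]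

end Statement2Aux

/-- Let `d ≥ 1` and let `A ⊆ ℓ_∞^d` be an equilateral set with
`1 ≤ |A| ≤ d`. Then `A` is not maximal: there is a point `q ∉ A` such that `A ∪ {q}`
is equilateral. Consequently `m(ℓ_∞^d) ≥ d + 1`. -/
theorem statement2 (d : ℕ) (hd : 1 ≤ d) (A : Set (Fin d → ℝ))
    (hA : Equilateral A) (hfin : A.Finite) (hcard1 : 1 ≤ A.ncard) (hcard2 : A.ncard ≤ d) :
    (∃ q : Fin d → ℝ, q ∉ A ∧ Equilateral (A ∪ {q})) ∧
    ∀ B : Set (Fin d → ℝ), MaximalEquilateral B → B.Finite → d + 1 ≤ B.ncard := by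
  constructor
  · obtain ⟨lam, hlam⟩ := hA
    obtain ⟨q, hq, hEq⟩ := Statement2Aux.extend_lemma d hd A lam hlam hfin hcard1 hcard2
    exact ⟨q, hq, lam, hEq⟩
  · intro B hB hBfin
    by_contra hcon
    push_neg at hcon
    have hBd : B.ncard ≤ d := Nat.lt_succ_iff.mp hcon
    rcases Nat.eq_zero_or_pos B.ncard with h0 | hpos
    · have hBempty : B = ∅ := (Set.ncard_eq_zero hBfin).mp h0
      have h01 : Equilateral ({0} : Set (Fin d → ℝ)) :=
        ⟨1, one_pos, Set.pairwise_singleton _ _⟩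
      have heq := hB.2 {0} h01 (by rw [hBempty]; exact Set.empty_subset _)
      rw [hBempty] at heq
      exact Set.singleton_ne_empty (0 : Fin d → ℝ) heq
    · obtain ⟨lam, hlam⟩ := hB.1
      obtain ⟨q, hq, hEq⟩ := Statement2Aux.extend_lemma d hd B lam hlam hBfin hpos hBd
      have heq := hB.2 (B ∪ {q}) ⟨lam, hEq⟩ Set.subset_union_left
      apply hq
      rw [← heq]
      exact Set.mem_union_right _ rfl
end

section
/- Let d ≥ k ≥ 1 be integers. For each n ∈ [d] let A_n^0, A_n^1 ⊆ [k] be given with A_n^0 ∩ A_n^1 = ∅ and A_n^0 ∪ A_n^1 ≠ ∅. Suppose that every 2-element subset {a,b} of [k] satisfies a ∈ A_n^0 and b ∈ A_n^1 (or a ∈ A_n^1 and b ∈ A_n^0) for some n ∈ [d]. Then there exist σ_1, …, σ_d ∈ {0,1} such that A_1^{σ_1} ∪ ⋯ ∪ A_d^{σ_d} = [k]. -/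
/-- Let `d ≥ k ≥ 1`. For each `n ∈ [d]` let `A n false, A n true ⊆ [k]`
be disjoint with nonempty union, and suppose every 2-element subset `{a, b}` of `[k]`
lies in the join of `A n false` and `A n true` for some `n`. Then one can choose
`σ : [d] → {0,1}` such that the sets `A n (σ n)` cover `[k]`. -/
theorem statement3 (d k : ℕ) (hk : 1 ≤ k) (hkd : k ≤ d)
    (A : Fin d → Bool → Finset (Fin k))
    (hdisj : ∀ n, Disjoint (A n false) (A n true))
    (hne : ∀ n, (A n false ∪ A n true).Nonempty)
    (hcover : ∀ a b : Fin k, a ≠ b →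
      ∃ n, (a ∈ A n false ∧ b ∈ A n true) ∨ (a ∈ A n true ∧ b ∈ A n false)) :
    ∃ σ : Fin d → Bool, ∀ j : Fin k, ∃ n, j ∈ A n (σ n) := by
  classical
  by_contra hcon
  push_neg at hcon
  -- hcon : ∀ σ, ∃ j, ∀ n, j ∉ A n (σ n)
  set supp : Fin k → Finset (Fin d) :=
    fun j => Finset.univ.filter (fun n => j ∈ A n false ∪ A n true) with hsupp
  have hsuppmem : ∀ j n, n ∈ supp j ↔ (j ∈ A n false ∨ j ∈ A n true) := by
    intro j n
    simp [hsupp, Finset.mem_filter, Finset.mem_union]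
  have hsuppmem' : ∀ (b : Bool) (j : Fin k) (n : Fin d), j ∈ A n b → n ∈ supp j := by
    intro b j n hjb
    apply (hsuppmem j n).2
    cases b
    · exact Or.inl hjb
    · exact Or.inr hjb
  have hside : ∀ j n, n ∈ supp j → j ∈ A n (if j ∈ A n true then true else false) := by
    intro j n hn
    rcases (hsuppmem j n).1 hn with h | h
    · have ht : j ∉ A n true := fun ht => Finset.disjoint_left.mp (hdisj n) h ht
      simp [ht, h]
    · simp [h]
  -- the key construction: build σ covering all j ∈ T via an injective system of
  -- representatives, agreeing with σ₀ away from the representatives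
  have build : ∀ (T : Finset (Fin k)) (ψ : Fin k → Fin d),
      (∀ a ∈ T, ∀ b ∈ T, ψ a = ψ b → a = b) →
      (∀ j ∈ T, ψ j ∈ supp j) → ∀ σ₀ : Fin d → Bool, ∃ σ : Fin d → Bool,
      (∀ j ∈ T, j ∈ A (ψ j) (σ (ψ j))) ∧ ∀ n, (∀ j ∈ T, ψ j ≠ n) → σ n = σ₀ n := by
    intro T ψ hinj hmem σ₀
    refine ⟨fun n => if h : ∃ j ∈ T, ψ j = n then
        (if h.choose ∈ A n true then true else false) else σ₀ n, ?_, ?_⟩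
    · intro j hj
      have hex : ∃ j' ∈ T, ψ j' = ψ j := ⟨j, hj, rfl⟩
      have hc := hex.choose_spec
      have hjj : hex.choose = j := hinj _ hc.1 _ hj hc.2
      simp only [dif_pos hex]
      rw [hjj]
      exact hside j (ψ j) (hmem j hj)
    · intro n hn
      have hnex : ¬ ∃ j ∈ T, ψ j = n := by
        rintro ⟨j, hj, rfl⟩
        exact hn j hj rfl
      simp only [dif_neg hnex]
  have hVuniv : (Finset.univ : Finset (Fin k)).biUnion supp = Finset.univ := by
    apply Finset.eq_univ_of_forall
    intro n
    obtain ⟨j, hj⟩ := hne n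
    exact Finset.mem_biUnion.mpr ⟨j, Finset.mem_univ j,
      (hsuppmem j n).2 (Finset.mem_union.mp hj)⟩
  -- pick S maximizing the deficiency |S| - |v(S)|
  obtain ⟨S, -, hSmax⟩ := Finset.exists_max_image
    ((Finset.univ : Finset (Fin k)).powerset)
    (fun S => (S.card : ℤ) - ((S.biUnion supp).card : ℤ))
    ⟨∅, Finset.empty_mem_powerset _⟩
  have hSmax' : ∀ S' : Finset (Fin k),
      (S'.card : ℤ) - ((S'.biUnion supp).card : ℤ)
        ≤ (S.card : ℤ) - ((S.biUnion supp).card : ℤ) :=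
    fun S' => hSmax S' (Finset.mem_powerset.mpr (Finset.subset_univ _))
  by_cases hHall : ∀ s : Finset (Fin k), s.card ≤ (s.biUnion supp).card
  · -- Hall's condition holds: get an SDR, build a covering σ, contradiction
    obtain ⟨f, hfinj, hf⟩ :=
      (Finset.all_card_le_biUnion_card_iff_exists_injective supp).1 hHall
    obtain ⟨σ, hσ1, -⟩ := build Finset.univ f
      (fun a _ b _ h => hfinj h) (fun j _ => hf j) (fun _ => true)
    obtain ⟨j₀, hj₀⟩ := hcon σ
    exact hj₀ (f j₀) (hσ1 j₀ (Finset.mem_univ _))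
  · push_neg at hHall
    obtain ⟨S₁, hS₁⟩ := hHall
    have hδ : 1 ≤ (S.card : ℤ) - ((S.biUnion supp).card : ℤ) := by
      have h1 := hSmax' S₁
      omega
    have hd0 : 0 < d := lt_of_lt_of_le hk hkd
    have hSne : S ≠ Finset.univ := by
      intro h
      rw [h, hVuniv] at hδ
      have h1 : (Finset.univ : Finset (Fin k)).card = k := by simp
      have h2 : (Finset.univ : Finset (Fin d)).card = d := by simp
      rw [h1, h2] at hδ
      omega
    obtain ⟨j₁, hj₁⟩ : ∃ j₁, j₁ ∉ S := by
      by_contra h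
      push_neg at h
      exact hSne (Finset.eq_univ_of_forall h)
    set V := S.biUnion supp with hV
    -- second Hall application: match Sᶜ into fresh coordinates
    have hHall2 : ∀ s : Finset {j : Fin k // j ∉ S},
        s.card ≤ (s.biUnion (fun e => supp e.1 \ V)).card := by
      intro s
      by_contra hlt
      push_neg at hlt
      set X := s.image (fun e => e.1) with hX
      have hXcard : X.card = s.card :=
        Finset.card_image_of_injective _ Subtype.val_injective
      have hdisjSX : Disjoint S X := by
        rw [Finset.disjoint_right]
        intro j hj
        obtain ⟨e, -, rfl⟩ := Finset.mem_image.mp hj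
        exact e.2
      have hcard : (S ∪ X).card = S.card + X.card :=
        Finset.card_union_of_disjoint hdisjSX
      have hsub : (S ∪ X).biUnion supp ⊆ V ∪ s.biUnion (fun e => supp e.1 \ V) := by
        intro n hn
        obtain ⟨j, hj, hnj⟩ := Finset.mem_biUnion.mp hn
        rcases Finset.mem_union.mp hj with hjS | hjX
        · exact Finset.mem_union_left _ (Finset.mem_biUnion.mpr ⟨j, hjS, hnj⟩)
        · by_cases hnV : n ∈ V
          · exact Finset.mem_union_left _ hnV
          · obtain ⟨e, he, hej⟩ := Finset.mem_image.mp hjX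
            refine Finset.mem_union_right _ (Finset.mem_biUnion.mpr
              ⟨e, he, Finset.mem_sdiff.mpr ⟨?_, hnV⟩⟩)
            rw [hej]
            exact hnj
      have hcard2 : ((S ∪ X).biUnion supp).card
          ≤ V.card + (s.biUnion (fun e => supp e.1 \ V)).card :=
        le_trans (Finset.card_le_card hsub) (Finset.card_union_le _ _)
      have hmax := hSmax' (S ∪ X)
      rw [hcard] at hmax
      omega
    obtain ⟨ψ, hψinj, hψ⟩ :=
      (Finset.all_card_le_biUnion_card_iff_exists_injective _).1 hHall2
    set ψ' : Fin k → Fin d :=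
      fun j => if h : j ∉ S then ψ ⟨j, h⟩ else ⟨0, hd0⟩ with hψ'
    have hinj' : ∀ a ∈ Sᶜ, ∀ b ∈ Sᶜ, ψ' a = ψ' b → a = b := by
      intro a ha b hb hab
      have ha' : a ∉ S := Finset.mem_compl.mp ha
      have hb' : b ∉ S := Finset.mem_compl.mp hb
      simp only [hψ', dif_pos ha', dif_pos hb'] at hab
      exact Subtype.mk_eq_mk.mp (hψinj hab)
    have hmem' : ∀ j ∈ Sᶜ, ψ' j ∈ supp j := by
      intro j hj
      have hj' : j ∉ S := Finset.mem_compl.mp hj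
      simp only [hψ', dif_pos hj']
      exact (Finset.mem_sdiff.mp (hψ ⟨j, hj'⟩)).1
    -- the point σ₁ avoiding j₁'s sets entirely
    set σ₁ : Fin d → Bool := fun n => if j₁ ∈ A n false then true else false with hσ₁
    have hσ₁avoid : ∀ n, j₁ ∉ A n (σ₁ n) := by
      intro n
      by_cases h : j₁ ∈ A n false
      · simp only [hσ₁, if_pos h]
        exact fun ht => Finset.disjoint_left.mp (hdisj n) h ht
      · simp only [hσ₁, if_neg h]
        exact h
    obtain ⟨σ, hσc, hσeq⟩ := build Sᶜ ψ' hinj' hmem' σ₁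
    obtain ⟨j₀, hj₀⟩ := hcon σ
    have hj₀S : j₀ ∈ S := by
      by_contra h
      exact hj₀ (ψ' j₀) (hσc j₀ (Finset.mem_compl.mpr h))
    have hfree : ∀ n, j₀ ∉ A n (σ₁ n) := by
      intro n
      by_cases hn : n ∈ supp j₀
      · have hnV : n ∈ V := Finset.mem_biUnion.mpr ⟨j₀, hj₀S, hn⟩
        have heq : σ n = σ₁ n := by
          apply hσeq
          intro j hj hjn
          have hjS : j ∉ S := Finset.mem_compl.mp hj
          have hmem2 := Finset.mem_sdiff.mp (hψ ⟨j, hjS⟩)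
          apply hmem2.2
          have : ψ' j = ψ ⟨j, hjS⟩ := by simp only [hψ', dif_pos hjS]
          rw [← this, hjn]
          exact hnV
        rw [← heq]
        exact hj₀ n
      · exact fun hmem2 => hn (hsuppmem' _ j₀ n hmem2)
    have hne01 : j₀ ≠ j₁ := fun h => hj₁ (h ▸ hj₀S)
    obtain ⟨n, hn⟩ := hcover j₀ j₁ hne01
    rcases hn with ⟨h0, h1⟩ | ⟨h0, h1⟩
    · have hnf : j₁ ∉ A n false := fun h => Finset.disjoint_left.mp (hdisj n) h h1
      have hσn : σ₁ n = false := by simp only [hσ₁, if_neg hnf]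
      exact hfree n (by rw [hσn]; exact h0)
    · have hσn : σ₁ n = true := by simp only [hσ₁, if_pos h1]
      exact hfree n (by rw [hσn]; exact h0)
end

section
/- Let X be any normed space, let d ≥ 4 be an integer, let q ∈ [1,∞), and let 1 ≤ p < log(5/2)/log 2. Then m(ℓ_p^d ⊕_q X) ≤ 5. -/
open WithLp

lemma ConvexOn.map_add_sub_map_le {f : ℝ → ℝ} {s : Set ℝ} (hf : ConvexOn ℝ s f) {x y h : ℝ}
    (hx : x ∈ s) (hyh : y + h ∈ s) (hxy : x ≤ y) (hh : 0 ≤ h) :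
    f (x + h) - f x ≤ f (y + h) - f y := by
  rcases hh.eq_or_lt with rfl | hh
  · simp
  have hd : 0 < y + h - x := by linarith
  set θ := h / (y + h - x)
  have hθ : θ * (y + h - x) = h := div_mul_cancel₀ h hd.ne'
  have hθ0 : 0 ≤ θ := by positivity
  have hθ1 : θ ≤ 1 := (div_le_one hd).2 (by linarith)
  have h₁ := hf.2 hx hyh (sub_nonneg.2 hθ1) hθ0 (by ring)
  have h₂ := hf.2 hx hyh hθ0 (sub_nonneg.2 hθ1) (by ring)
  simp only [smul_eq_mul] at h₁ h₂
  rw [show (1 - θ) * x + θ * (y + h) = x + h by linear_combination hθ] at h₁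
  rw [show θ * x + (1 - θ) * (y + h) = y by linear_combination -hθ] at h₂
  linarith

lemma abs_rpow_sub_abs_sub_rpow_lt {p c L t : ℝ} (hp : 1 ≤ p) (hc : 0 < c) (hcL : 2 * c < L)
    (ht : |t| ≤ L) : |t| ^ p - |t - c| ^ p < L ^ p - c ^ p := by
  have hp0 : 0 < p := by linarith
  have hcL' : 2 * c ^ p < L ^ p := calc
    2 * c ^ p ≤ 2 ^ p * c ^ p := by gcongr; exact Real.self_le_rpow_of_one_le one_le_two hp
    _ = (2 * c) ^ p := (Real.mul_rpow zero_le_two hc.le).symm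
    _ < L ^ p := Real.rpow_lt_rpow (by positivity) hcL hp0
  rcases le_or_gt t c with htc | htc
  · suffices |t| ^ p - |t - c| ^ p ≤ c ^ p by linarith
    have hnn := Real.rpow_nonneg (abs_nonneg (t - c)) p
    rcases le_or_gt |t| c with htc' | htc'
    · linarith [Real.rpow_le_rpow (abs_nonneg t) htc' hp0.le]
    · have ht0 : t < 0 := by
        by_contra! ht0
        rw [abs_of_nonneg ht0] at htc'
        linarith
      have : |t| ≤ |t - c| := by
        rw [abs_of_neg ht0, abs_of_neg (by linarith)]
        linarith
      linarith [Real.rpow_le_rpow (abs_nonneg t) this hp0.le, Real.rpow_nonneg hc.le p]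
  · have hinc := (convexOn_rpow hp).map_add_sub_map_le (x := t - c) (y := L - c) (h := c)
      (Set.mem_Ici.2 (by linarith)) (Set.mem_Ici.2 (by linarith))
      (by linarith [le_abs_self t]) hc.le
    simp only [sub_add_cancel] at hinc
    have hLc : c ^ p < (L - c) ^ p := Real.rpow_lt_rpow hc.le (by linarith) hp0
    rw [abs_of_pos (by linarith), abs_of_pos (by linarith)]
    linarith

lemma eq_zero_of_abs_sub_one_rpow_eq {p a : ℝ} (hp : p ≠ 0) (h : |a - 1| ^ p = |a + 1| ^ p) :
    a = 0 := by
  rw [Real.rpow_left_inj (abs_nonneg _) (abs_nonneg _) hp, abs_eq_abs] at h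
  rcases h with h | h <;> linarith

lemma exists_rpow_add_three_eq_and_two_mul_lt {p : ℝ} (hp : 1 ≤ p) (h : (2 : ℝ) ^ p < 5 / 2) :
    ∃ c : ℝ, 0 < c ∧ c ^ p + 3 = 2 * 2 ^ p ∧ 2 * c < (2 * 2 ^ p) ^ p⁻¹ := by
  have hp0 : 0 < p := by linarith
  have h2 : 2 ≤ (2 : ℝ) ^ p := Real.self_le_rpow_of_one_le one_le_two hp
  have hc : 0 < 2 * (2 : ℝ) ^ p - 3 := by linarith
  refine ⟨(2 * 2 ^ p - 3) ^ p⁻¹, by positivity, ?_, ?_⟩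
  · rw [Real.rpow_inv_rpow hc.le hp0.ne']
    ring
  · rw [← Real.rpow_lt_rpow_iff (by positivity) (by positivity) hp0,
      Real.mul_rpow zero_le_two (by positivity), Real.rpow_inv_rpow hc.le hp0.ne',
      Real.rpow_inv_rpow (by positivity) hp0.ne']
    nlinarith

lemma two_rpow_lt_of_lt_log_div_log {p : ℝ} (hp : p < Real.log (5 / 2) / Real.log 2) :
    (2 : ℝ) ^ p < 5 / 2 :=
  (Real.lt_logb_iff_rpow_lt one_lt_two (by norm_num)).1 hp

section Equidistant

variable {E F : Type*} [NormedAddCommGroup E] [NormedAddCommGroup F]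

/-- Allowing `r < lam`, not just `r = lam`, is what lets this property pass to `ℓ_p`- and
`⊕_q`-sums. -/
def NoEquidistantPointWithin (A : Set E) (lam : ℝ) : Prop :=
  ∀ (z : E) (r : ℝ), r ≤ lam → ∃ a ∈ A, ‖z - a‖ ≠ r

lemma EquilateralWith.image {A : Set E} {lam : ℝ} (hA : EquilateralWith A lam) {f : E → F}
    (hf : Isometry f) : EquilateralWith (f '' A) lam := by
  refine ⟨hA.1, ?_⟩
  rintro _ ⟨a, ha, rfl⟩ _ ⟨b, hb, rfl⟩ hab
  rw [← dist_eq_norm, hf.dist_eq, dist_eq_norm]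
  exact hA.2 ha hb (ne_of_apply_ne f hab)

lemma NoEquidistantPointWithin.maximalEquilateral {A : Set E} {lam : ℝ}
    (hno : NoEquidistantPointWithin A lam) (hA : EquilateralWith A lam) (hA₂ : A.Nontrivial) :
    MaximalEquilateral A := by
  refine ⟨⟨lam, hA⟩, fun B ⟨mu, _, hB⟩ hAB => Set.Subset.antisymm ?_ hAB⟩
  obtain ⟨a, ha, b, hb, hab⟩ := hA₂
  have hmu : mu = lam := by rw [← hB (hAB ha) (hAB hb) hab, hA.2 ha hb hab]
  intro z hz
  by_contra hzA
  obtain ⟨a, ha, hza⟩ := hno z lam le_rfl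
  exact hza (hmu ▸ hB hz (hAB ha) fun h => hzA (h ▸ ha))

lemma NoEquidistantPointWithin.image {A : Set E} {lam : ℝ} (hA : NoEquidistantPointWithin A lam)
    {f : E → F} {s : ℝ} (hs : 0 < s)
    (hsplit : ∀ z : F, ∃ y : E, ∃ t : ℝ, 0 ≤ t ∧ ∀ a : E, ‖z - f a‖ ^ s = ‖y - a‖ ^ s + t) :
    NoEquidistantPointWithin (f '' A) lam := by
  intro z r hr
  by_contra! hz
  obtain ⟨y, t, ht, hyt⟩ := hsplit z
  obtain ⟨a₀, ha₀, -⟩ := hA y lam le_rfl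
  have hr : 0 ≤ r := hz _ (Set.mem_image_of_mem f ha₀) ▸ norm_nonneg _
  have hpow : ∀ a ∈ A, ‖y - a‖ ^ s = r ^ s - t := fun a ha => by
    rw [← hz _ (Set.mem_image_of_mem f ha), hyt]
    ring
  have hy₀ : ‖y - a₀‖ ≤ r :=
    (Real.rpow_le_rpow_iff (norm_nonneg _) hr hs).1 (by linarith [hpow a₀ ha₀])
  obtain ⟨a, ha, hne⟩ := hA y ‖y - a₀‖ (by linarith)
  exact hne ((Real.rpow_left_inj (norm_nonneg _) (norm_nonneg _) hs.ne').1
    (by rw [hpow a ha, hpow a₀ ha₀]))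

end Equidistant

section LpSums

variable {p : ENNReal} {E F : Type*} [NormedAddCommGroup E] [NormedAddCommGroup F]

lemma WithLp.prod_norm_rpow_eq_add (hp : 0 < p.toReal) (f : WithLp p (E × F)) :
    ‖f‖ ^ p.toReal = ‖f.fst‖ ^ p.toReal + ‖f.snd‖ ^ p.toReal := by
  rw [prod_norm_eq_add hp, one_div, Real.rpow_inv_rpow (by positivity) hp.ne']

lemma PiLp.norm_rpow_eq_sum {ι : Type*} [Fintype ι] {β : ι → Type*}
    [∀ i, NormedAddCommGroup (β i)] (hp : 0 < p.toReal) (f : PiLp p β) :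
    ‖f‖ ^ p.toReal = ∑ i, ‖f i‖ ^ p.toReal := by
  rw [PiLp.norm_eq_sum hp, one_div, Real.rpow_inv_rpow (by positivity) hp.ne']

variable {m n : ℕ}

lemma PiLp.norm_sub_toLp_append_zero_rpow (hp : 0 < p.toReal)
    (z : PiLp p fun _ : Fin (m + n) => E) (a : PiLp p fun _ : Fin m => E) :
    ‖z - toLp p (Fin.append (ofLp a) 0)‖ ^ p.toReal =
      ‖toLp p (fun i => z (Fin.castAdd n i)) - a‖ ^ p.toReal +
        ‖toLp p fun j => z (Fin.natAdd m j)‖ ^ p.toReal := by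
  simp [PiLp.norm_rpow_eq_sum hp, Fin.sum_univ_add]

variable [Fact (1 ≤ p)]

lemma NoEquidistantPointWithin.image_toLp_prod_zero (hp : p ≠ ⊤) {A : Set E} {lam : ℝ}
    (hA : NoEquidistantPointWithin A lam) :
    NoEquidistantPointWithin ((fun a => toLp p (a, (0 : F))) '' A) lam := by
  have hp0 : 0 < p.toReal := ENNReal.toReal_pos (zero_lt_one.trans_le Fact.out).ne' hp
  refine hA.image hp0 fun z => ⟨z.fst, ‖z.snd‖ ^ p.toReal, by positivity, fun a => ?_⟩
  rw [WithLp.prod_norm_rpow_eq_add hp0]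
  simp

lemma PiLp.isometry_toLp_append_zero (hp : 0 < p.toReal) :
    Isometry fun a : PiLp p (fun _ : Fin m => E) =>
      toLp p (Fin.append (ofLp a) (0 : Fin n → E)) := by
  refine Isometry.of_dist_eq fun a b => ?_
  rw [dist_eq_norm, dist_eq_norm, ← Real.rpow_left_inj (norm_nonneg _) (norm_nonneg _) hp.ne',
    PiLp.norm_sub_toLp_append_zero_rpow hp]
  simp [← Pi.zero_def, Real.zero_rpow hp.ne']

lemma NoEquidistantPointWithin.image_toLp_append_zero (hp : 0 < p.toReal)
    {A : Set (PiLp p fun _ : Fin m => E)} {lam : ℝ} (hA : NoEquidistantPointWithin A lam) :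
    NoEquidistantPointWithin
      ((fun a => toLp p (Fin.append (ofLp a) (0 : Fin n → E))) '' A) lam :=
  hA.image hp fun z => ⟨_, _, by positivity, PiLp.norm_sub_toLp_append_zero_rpow hp z⟩

end LpSums

section FivePoints

def fivePoints (c : ℝ) : Fin 5 → Fin 4 → ℝ :=
  ![![c, -1, -1, -1], ![c, -1, 1, 1], ![c, 1, -1, 1], ![c, 1, 1, -1], 0]

variable {p c : ℝ}

lemma norm_sub_toLp_rpow_eq_sum {n : ℕ} (hp : 0 < p)
    (y : PiLp (ENNReal.ofReal p) fun _ : Fin n => ℝ) (u : Fin n → ℝ) :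
    ‖y - toLp _ u‖ ^ p = ∑ k, |y k - u k| ^ p := by
  simpa [ENNReal.toReal_ofReal hp.le] using
    PiLp.norm_rpow_eq_sum (by rwa [ENNReal.toReal_ofReal hp.le]) (y - toLp (ENNReal.ofReal p) u)

lemma nontrivial_range_fivePoints :
    (Set.range fun i => toLp (ENNReal.ofReal p) (fivePoints c i)).Nontrivial := by
  refine Set.nontrivial_of_mem_mem_ne (Set.mem_range_self 0) (Set.mem_range_self 1) fun h => ?_
  have := congrArg (fun y : PiLp (ENNReal.ofReal p) (fun _ : Fin 4 => ℝ) => y 2) h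
  simp only [fivePoints, Matrix.cons_val] at this
  norm_num at this

lemma sum_abs_sub_fivePoints_rpow (hp : 0 < p) (hc₀ : 0 ≤ c) (hc : c ^ p + 3 = 2 * 2 ^ p)
    {i j : Fin 5} (hij : i ≠ j) : ∑ k, |fivePoints c i k - fivePoints c j k| ^ p = 2 * 2 ^ p := by
  fin_cases i <;> fin_cases j <;> simp [fivePoints, Fin.sum_univ_four] at hij ⊢ <;>
    norm_num [abs_of_nonneg hc₀, Real.zero_rpow hp.ne'] <;> linarith

variable [Fact (1 ≤ ENNReal.ofReal p)]

lemma equilateralWith_fivePoints (hp : 0 < p) (hc₀ : 0 ≤ c) (hc : c ^ p + 3 = 2 * 2 ^ p) :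
    EquilateralWith (Set.range fun i => toLp (ENNReal.ofReal p) (fivePoints c i))
      ((2 * 2 ^ p) ^ p⁻¹) := by
  refine ⟨by positivity, ?_⟩
  rintro _ ⟨i, rfl⟩ _ ⟨j, rfl⟩ hij
  rw [← Real.rpow_left_inj (norm_nonneg _) (by positivity) hp.ne',
    Real.rpow_inv_rpow (by positivity) hp.ne', norm_sub_toLp_rpow_eq_sum hp]
  exact sum_abs_sub_fivePoints_rpow hp hc₀ hc fun h => hij (by rw [h])

lemma noEquidistantPointWithin_fivePoints (hp : 1 ≤ p) (hc₀ : 0 < c)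
    (hc : c ^ p + 3 = 2 * 2 ^ p) (hcL : 2 * c < (2 * 2 ^ p) ^ p⁻¹) :
    NoEquidistantPointWithin (Set.range fun i => toLp (ENNReal.ofReal p) (fivePoints c i))
      ((2 * 2 ^ p) ^ p⁻¹) := by
  have hp₀ : 0 < p := by linarith
  intro y r hr
  by_contra! hy
  have hr₀ : 0 ≤ r := hy _ (Set.mem_range_self 0) ▸ norm_nonneg _
  have hd (i : Fin 5) : ∑ k, |y k - fivePoints c i k| ^ p = r ^ p := by
    rw [← norm_sub_toLp_rpow_eq_sum hp₀, hy _ (Set.mem_range_self i)]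
  have h₀ := hd 0
  have h₁ := hd 1
  have h₂ := hd 2
  have h₃ := hd 3
  have h₄ := hd 4
  simp only [fivePoints, Fin.sum_univ_four, Matrix.cons_val] at h₀ h₁ h₂ h₃ h₄
  norm_num at h₀ h₁ h₂ h₃ h₄
  have hy₁ : y 1 = 0 := eq_zero_of_abs_sub_one_rpow_eq hp₀.ne' (by linarith)
  have hy₂ : y 2 = 0 := eq_zero_of_abs_sub_one_rpow_eq hp₀.ne' (by linarith)
  have hy₃ : y 3 = 0 := eq_zero_of_abs_sub_one_rpow_eq hp₀.ne' (by linarith)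
  simp only [hy₁, hy₂, hy₃] at h₀ h₄
  norm_num [Real.zero_rpow hp₀.ne'] at h₀ h₄
  have hy₀ : |y 0| ≤ (2 * 2 ^ p) ^ p⁻¹ :=
    ((Real.rpow_left_inj (abs_nonneg _) hr₀ hp₀.ne').1 h₄).trans_le hr
  have := abs_rpow_sub_abs_sub_rpow_lt hp hc₀ hcL hy₀
  rw [Real.rpow_inv_rpow (by positivity) hp₀.ne'] at this
  linarith

end FivePoints

theorem statement10_general (X : Type*) [NormedAddCommGroup X]
    (d : ℕ) (hd : 4 ≤ d) (q : ℝ) (hq : 1 ≤ q)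
    (p : ℝ) (hp1 : 1 ≤ p) (hp2 : p < Real.log (5 / 2) / Real.log 2) :
    letI : Fact (1 ≤ ENNReal.ofReal p) := ⟨ENNReal.one_le_ofReal.mpr hp1⟩
    letI : Fact (1 ≤ ENNReal.ofReal q) := ⟨ENNReal.one_le_ofReal.mpr hq⟩
    ∃ A : Set (WithLp (ENNReal.ofReal q)
        ((PiLp (ENNReal.ofReal p) fun _ : Fin d => ℝ) × X)),
      MaximalEquilateral A ∧ A.Finite ∧ A.ncard ≤ 5 := by
  have : Fact (1 ≤ ENNReal.ofReal p) := ⟨ENNReal.one_le_ofReal.mpr hp1⟩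
  have : Fact (1 ≤ ENNReal.ofReal q) := ⟨ENNReal.one_le_ofReal.mpr hq⟩
  obtain ⟨k, rfl⟩ := Nat.exists_eq_add_of_le hd
  have hp₀ : 0 < p := by linarith
  have hpr : 0 < (ENNReal.ofReal p).toReal := by rwa [ENNReal.toReal_ofReal hp₀.le]
  obtain ⟨c, hc₀, hc, hcL⟩ :=
    exists_rpow_add_three_eq_and_two_mul_lt hp1 (two_rpow_lt_of_lt_log_div_log hp2)
  set S := Set.range fun i => toLp (ENNReal.ofReal p) (fivePoints c i) with hS
  let G := fun a : PiLp (ENNReal.ofReal p) (fun _ : Fin 4 => ℝ) =>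
    toLp (ENNReal.ofReal p) (Fin.append (ofLp a) (0 : Fin k → ℝ))
  let F := fun b : PiLp (ENNReal.ofReal p) (fun _ : Fin (4 + k) => ℝ) =>
    toLp (ENNReal.ofReal q) (b, (0 : X))
  have hG : Isometry G := PiLp.isometry_toLp_append_zero hpr
  have hF : Isometry F := Isometry.of_dist_eq fun _ _ => dist_toLp_fst _ _ _ _ _
  refine ⟨F '' (G '' S), ?_, ((Set.finite_range _).image G).image F, ?_⟩
  · exact ((noEquidistantPointWithin_fivePoints hp1 hc₀ hc hcL).image_toLp_append_zero hpr
      |>.image_toLp_prod_zero ENNReal.ofReal_ne_top).maximalEquilateral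
      (((equilateralWith_fivePoints hp₀ hc₀.le hc).image hG).image hF)
      ((nontrivial_range_fivePoints.image hG.injective).image hF.injective)
  · calc (F '' (G '' S)).ncard ≤ (G '' S).ncard := Set.ncard_image_le
      _ ≤ S.ncard := Set.ncard_image_le
      _ ≤ (Set.univ : Set (Fin 5)).ncard := by
        rw [hS, ← Set.image_univ]
        exact Set.ncard_image_le
      _ = 5 := by simp

/-- Let `X` be any normed space, `d ≥ 4`, `q ∈ [1, ∞)`, and
`1 ≤ p < log(5/2)/log 2`. Then `m(ℓ_p^d ⊕_q X) ≤ 5`. -/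
theorem statement10 (X : Type*) [NormedAddCommGroup X] [NormedSpace ℝ X]
    (d : ℕ) (hd : 4 ≤ d) (q : ℝ) (hq : 1 ≤ q)
    (p : ℝ) (hp1 : 1 ≤ p) (hp2 : p < Real.log (5 / 2) / Real.log 2) :
    letI : Fact (1 ≤ ENNReal.ofReal p) := ⟨ENNReal.one_le_ofReal.mpr hp1⟩
    letI : Fact (1 ≤ ENNReal.ofReal q) := ⟨ENNReal.one_le_ofReal.mpr hq⟩
    ∃ A : Set (WithLp (ENNReal.ofReal q)
        ((PiLp (ENNReal.ofReal p) fun _ : Fin d => ℝ) × X)),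
      MaximalEquilateral A ∧ A.Finite ∧ A.ncard ≤ 5 :=
  statement10_general X d hd q hq p hp1 hp2
end

section
/- Let 1 ≤ p ≤ 2. For each λ ∈ [2^{1−1/p}, 2^{1/p}] there exist vectors u, v ∈ ℝ² with ‖u‖_p = ‖v‖_p = 1 such that ‖u + v‖_p = ‖u − v‖_p = λ. -/
/-- The `p`-norm on `ℝ²`. -/
noncomputable def pNorm2 (p : ℝ) (x : Fin 2 → ℝ) : ℝ :=
  (|x 0| ^ p + |x 1| ^ p) ^ (1 / p)

/-- Let `1 ≤ p ≤ 2`. For each `lam ∈ [2^{1−1/p}, 2^{1/p}]` there exist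
vectors `u, v ∈ ℝ²` of `p`-norm `1` such that `‖u + v‖_p = ‖u − v‖_p = lam`. -/
theorem statement12 (p : ℝ) (hp1 : 1 ≤ p) (hp2 : p ≤ 2) (lam : ℝ)
    (hlam1 : (2 : ℝ) ^ (1 - 1 / p) ≤ lam) (hlam2 : lam ≤ (2 : ℝ) ^ (1 / p)) :
    ∃ u v : Fin 2 → ℝ, pNorm2 p u = 1 ∧ pNorm2 p v = 1 ∧
      pNorm2 p (u + v) = lam ∧ pNorm2 p (u - v) = lam := by
  have hp0 : (0:ℝ) < p := lt_of_lt_of_le one_pos hp1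
  have hpne : p ≠ 0 := ne_of_gt hp0
  set T : ℝ → ℝ := fun s => (1 - s ^ p) ^ (1/p) with hT
  set g : ℝ → ℝ := fun s => |s + T s| ^ p + |s - T s| ^ p with hg
  have hcontpow : Continuous fun x : ℝ => x ^ p :=
    continuous_iff_continuousAt.mpr fun x => Real.continuousAt_rpow_const x p (Or.inr (le_of_lt hp0))
  have hcontpow' : Continuous fun x : ℝ => x ^ (1/p) :=
    continuous_iff_continuousAt.mpr fun x =>
      Real.continuousAt_rpow_const x (1/p) (Or.inr (by positivity))
  have hTc : Continuous T := hcontpow'.comp (continuous_const.sub hcontpow)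
  have hgc : Continuous g := by
    apply Continuous.add
    · exact hcontpow.comp ((continuous_id.add hTc).abs)
    · exact hcontpow.comp ((continuous_id.sub hTc).abs)
  set a : ℝ := (2:ℝ) ^ (-(1/p)) with ha
  have ha0 : 0 < a := Real.rpow_pos_of_pos two_pos _
  have ha1 : a ≤ 1 := Real.rpow_le_one_of_one_le_of_nonpos one_le_two (neg_nonpos.mpr (by positivity))
  have hap : a ^ p = 2⁻¹ := by
    rw [ha, ← Real.rpow_mul (by norm_num : (0:ℝ) ≤ 2)]
    rw [show -(1/p) * p = -1 by field_simp]
    exact Real.rpow_neg_one 2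
  have hTa : T a = a := by
    simp only [hT, hap]
    rw [show (1:ℝ) - 2⁻¹ = 2⁻¹ by norm_num, ← Real.rpow_neg_one 2,
      ← Real.rpow_mul (by norm_num : (0:ℝ) ≤ 2)]
    rw [show (-1 : ℝ) * (1/p) = -(1/p) by ring]
  have hga : g a = 2 ^ (p - 1) := by
    simp only [hg, hTa, sub_self, abs_zero, Real.zero_rpow hpne, add_zero]
    rw [show a + a = 2 * a by ring, abs_of_pos (by linarith), Real.mul_rpow (by norm_num) ha0.le,
      hap, Real.rpow_sub two_pos, Real.rpow_one]
    ring
  have hg1 : g 1 = 2 := by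
    have h0 : T 1 = 0 := by
      rw [hT]; simp only; rw [Real.one_rpow, sub_self, Real.zero_rpow (one_div_ne_zero hpne)]
    simp only [hg, h0, add_zero, sub_zero, abs_one, Real.one_rpow]
    norm_num
  -- lam ^ p ∈ [2^(p-1), 2]
  have hlam0 : (0:ℝ) < lam := lt_of_lt_of_le (Real.rpow_pos_of_pos two_pos _) hlam1
  have hlow : 2 ^ (p - 1) ≤ lam ^ p := by
    calc 2 ^ (p-1) = ((2:ℝ) ^ (1 - 1/p)) ^ p := by
          rw [← Real.rpow_mul (by norm_num : (0:ℝ) ≤ 2)]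
          congr 1; field_simp
      _ ≤ lam ^ p := Real.rpow_le_rpow (Real.rpow_nonneg (by norm_num) _) hlam1 hp0.le
  have hhigh : lam ^ p ≤ 2 := by
    calc lam ^ p ≤ ((2:ℝ) ^ (1/p)) ^ p := Real.rpow_le_rpow hlam0.le hlam2 hp0.le
      _ = 2 := by
          rw [← Real.rpow_mul (by norm_num : (0:ℝ) ≤ 2), one_div_mul_cancel hpne, Real.rpow_one]
  have hIVT := intermediate_value_Icc ha1 hgc.continuousOn
  have hmem : lam ^ p ∈ Set.Icc (g a) (g 1) := by
    rw [hga, hg1]; exact ⟨hlow, hhigh⟩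
  obtain ⟨s, hs, hgs⟩ := hIVT hmem
  obtain ⟨has, hs1⟩ := hs
  have hs0 : 0 < s := lt_of_lt_of_le ha0 has
  have hsp1 : s ^ p ≤ 1 := Real.rpow_le_one hs0.le hs1 hp0.le
  set t : ℝ := T s with ht
  have ht0 : 0 ≤ t := Real.rpow_nonneg (by linarith) _
  have htp : t ^ p = 1 - s ^ p := by
    rw [ht, hT]
    simp only
    rw [one_div, Real.rpow_inv_rpow (by linarith) hpne]
  have hsum : s ^ p + t ^ p = 1 := by rw [htp]; ring
  refine ⟨![s, t], ![t, -s], ?_, ?_, ?_, ?_⟩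
  · simp only [pNorm2, Matrix.cons_val_zero, Matrix.cons_val_one, Matrix.head_cons,
      abs_of_pos hs0, abs_of_nonneg ht0, hsum, Real.one_rpow]
  · simp only [pNorm2, Matrix.cons_val_zero, Matrix.cons_val_one, Matrix.head_cons,
      abs_neg, abs_of_pos hs0, abs_of_nonneg ht0, Real.one_rpow]
    rw [add_comm, hsum, Real.one_rpow]
  · simp only [pNorm2, Pi.add_apply, Matrix.cons_val_zero, Matrix.cons_val_one, Matrix.head_cons]
    have : |t + -s| = |s - t| := by rw [abs_sub_comm]; ring_nf
    rw [this]
    have : |s + t| ^ p + |s - t| ^ p = lam ^ p := hgs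
    rw [this, one_div, Real.rpow_rpow_inv hlam0.le hpne]
  · simp only [pNorm2, Pi.sub_apply, Matrix.cons_val_zero, Matrix.cons_val_one, Matrix.head_cons]
    have h1 : |t - -s| = |s + t| := by rw [show t - -s = s + t by ring]
    rw [h1]
    have : |s + t| ^ p + |s - t| ^ p = lam ^ p := hgs
    rw [add_comm, this, one_div, Real.rpow_rpow_inv hlam0.le hpne]
end

section
/- Let n ≥ 1 and let H be a normalised Hadamard matrix of order n with rows [1, h_1], …, [1, h_n], so that h_1, …, h_n ∈ ℝ^{n−1} form a Hadamard simplex. Let p ∈ [1,∞), let X be a normed space and let u ∈ X. Suppose (x_1, …, x_{n−1}) ∈ X ⊕_p ⋯ ⊕_p X (n−1 summands) has the same distance to each of the n points h_i ⊗ u := (h_i^{(1)}u, …, h_i^{(n−1)}u). Then ‖x_j − u‖ = ‖x_j + u‖ for all j ∈ [n−1]. -/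
/-!
Write `A_j = ‖x_j - u‖^p` and `B_j = ‖x_j + u‖^p`. Since every `h_i^{(j)}` is `±1`, the `p`-th power
of the distance from `x` to `h_i ⊗ u` is `∑_j (A_j + B_j)/2 + ⟨h_i, d⟩` with `d_j = (A_j - B_j)/2`,
so `⟨h_i, d⟩` does not depend on `i`. Hence `H` kills the vector `(-⟨h_i, d⟩, d)`, and as `H` is
invertible, `d = 0`.
-/

/-- An `n × n` real matrix is a Hadamard matrix if every entry is `±1` and
`H * Hᵀ = n • 1`. -/
def IsHadamardMatrix {n : ℕ} (H : Matrix (Fin n) (Fin n) ℝ) : Prop :=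
  (∀ i j, H i j = 1 ∨ H i j = -1) ∧ H * H.transpose = (n : ℝ) • 1

open Matrix

namespace IsHadamardMatrix

variable {n : ℕ} {H : Matrix (Fin n) (Fin n) ℝ}

theorem transpose_mul_self (hH : IsHadamardMatrix H) : H.transpose * H = (n : ℝ) • 1 := by
  rcases Nat.eq_zero_or_pos n with rfl | hn
  · exact Subsingleton.elim _ _
  have hn' : (n : ℝ) ≠ 0 := by positivity
  have hright : H * ((n : ℝ)⁻¹ • H.transpose) = 1 := by
    rw [Matrix.mul_smul, hH.2, smul_smul, inv_mul_cancel₀ hn', one_smul]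
  have hleft := mul_eq_one_comm.mp hright
  rwa [Matrix.smul_mul, inv_smul_eq_iff₀ hn'] at hleft

theorem eq_zero_of_mulVec_eq_zero (hH : IsHadamardMatrix H) {w : Fin n → ℝ}
    (hw : H *ᵥ w = 0) : w = 0 := by
  rcases Nat.eq_zero_or_pos n with rfl | hn
  · exact Subsingleton.elim _ _
  have hnw : (n : ℝ) • w = 0 := by
    calc (n : ℝ) • w = (H.transpose * H) *ᵥ w := by
          rw [hH.transpose_mul_self, Matrix.smul_mulVec, Matrix.one_mulVec]
      _ = H.transpose *ᵥ (H *ᵥ w) := (Matrix.mulVec_mulVec _ _ _).symm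
      _ = 0 := by rw [hw, Matrix.mulVec_zero]
  exact (smul_eq_zero.mp hnw).resolve_left (by positivity)

/-- A linear functional that is constant on a Hadamard simplex vanishes. -/
theorem eq_zero_of_tail_dotProduct_eq {m : ℕ} {H : Matrix (Fin (m + 1)) (Fin (m + 1)) ℝ}
    (hH : IsHadamardMatrix H) (hcol : ∀ i, H i 0 = 1) {d : Fin m → ℝ} {K : ℝ}
    (hd : ∀ i, Fin.tail (H i) ⬝ᵥ d = K) : d = 0 := by
  have hker : H *ᵥ Fin.cons (-K) d = 0 := by
    funext i
    rw [mulVec, dotProduct, Fin.sum_univ_succ, ← hd i]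
    simp [dotProduct, Fin.tail, hcol i]
  funext j
  simpa using congrFun (hH.eq_zero_of_mulVec_eq_zero hker) j.succ

end IsHadamardMatrix

theorem norm_sub_smul_rpow_of_eq_one_or_eq_neg_one {X : Type*} [SeminormedAddCommGroup X]
    [Module ℝ X] (y u : X) (p : ℝ) {s : ℝ} (hs : s = 1 ∨ s = -1) :
    ‖y - s • u‖ ^ p
      = (‖y - u‖ ^ p + ‖y + u‖ ^ p) / 2 + s * ((‖y - u‖ ^ p - ‖y + u‖ ^ p) / 2) := by
  rcases hs with rfl | rfl
  · rw [one_smul]; ring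
  · rw [neg_smul, one_smul, sub_neg_eq_add]; ring

/-- Let `H` be a normalised Hadamard matrix of order `n ≥ 1` (all entries
of its `0`-th column equal `1`), with rows `[1, h_i]`, so `h_i j = H i (j+1)` for
`j ∈ Fin (n−1)`. Let `p ∈ [1, ∞)`, let `X` be a normed space and `u ∈ X`. If
`(x_1, …, x_{n−1})` in the `ℓ_p`-sum of `n−1` copies of `X` has the same distance `c` to
each of the `n` points `h_i ⊗ u = (h_i^{(1)}u, …, h_i^{(n−1)}u)`, then
`‖x_j − u‖ = ‖x_j + u‖` for all `j`. -/
theorem statement14 (n : ℕ) (hn : 1 ≤ n)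
    (H : Matrix (Fin n) (Fin n) ℝ) (hHad : IsHadamardMatrix H)
    (hnorm : ∀ i : Fin n, H i ⟨0, hn⟩ = 1)
    (p : ℝ) (hp : 1 ≤ p)
    (X : Type*) [NormedAddCommGroup X] [NormedSpace ℝ X]
    (u : X) (x : Fin (n - 1) → X) (c : ℝ)
    (hdist : ∀ i : Fin n,
      (∑ j : Fin (n - 1),
          ‖x j - H i ⟨(j : ℕ) + 1, by have := j.isLt; omega⟩ • u‖ ^ p) ^ (1 / p) = c) :
    ∀ j : Fin (n - 1), ‖x j - u‖ = ‖x j + u‖ := by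
  obtain ⟨m, rfl⟩ : ∃ m, n = m + 1 := ⟨n - 1, by omega⟩
  have hp0 : p ≠ 0 := by linarith
  set A : Fin m → ℝ := fun j => ‖x j - u‖ ^ p
  set B : Fin m → ℝ := fun j => ‖x j + u‖ ^ p
  have hsum (i : Fin (m + 1)) : ∑ j : Fin m, ‖x j - H i j.succ • u‖ ^ p = c ^ p := by
    have hnonneg : 0 ≤ ∑ j : Fin m, ‖x j - H i j.succ • u‖ ^ p :=
      Finset.sum_nonneg fun j _ => Real.rpow_nonneg (norm_nonneg _) p
    refine (Real.rpow_inv_eq hnonneg ?_ hp0).mp ?_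
    · exact hdist i ▸ Real.rpow_nonneg hnonneg _
    · rw [← one_div]; exact hdist i
  have hconst (i : Fin (m + 1)) :
      Fin.tail (H i) ⬝ᵥ (fun j => (A j - B j) / 2) = c ^ p - ∑ j, (A j + B j) / 2 := by
    rw [← hsum i, eq_sub_iff_add_eq, dotProduct, ← Finset.sum_add_distrib]
    refine Finset.sum_congr rfl fun j _ => ?_
    rw [norm_sub_smul_rpow_of_eq_one_or_eq_neg_one _ _ _ (hHad.1 i j.succ), Fin.tail]
    ring
  have hd := hHad.eq_zero_of_tail_dotProduct_eq (fun i => by simpa using hnorm i) hconst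
  intro j
  have hAB : A j = B j := by
    have := congrFun hd j
    simp only [Pi.zero_apply] at this
    linarith
  exact (Real.rpow_left_inj (norm_nonneg _) (norm_nonneg _) hp0).mp hAB
end

section
/- Let n ≥ 1, let h_1, …, h_n ∈ ℝ^{n−1} be a Hadamard simplex, and let p ∈ [1,∞). Let u and v be linearly independent unit vectors in a strictly convex 2-dimensional normed space X. Suppose x = (x_1, …, x_{n−1}) ∈ X ⊕_p ⋯ ⊕_p X (n−1 summands) has the same distance to each point of {h_i ⊗ u : i ∈ [n]} and also the same distance to each point of {h_i ⊗ v : i ∈ [n]}. Then x = 0. -/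
open Finset
open scoped Matrix

section Plane

variable {X : Type*} [NormedAddCommGroup X] [NormedSpace ℝ X]

theorem eq_zero_of_norm_smul_sub_eq_norm_smul_add {v : X} (hv : v ≠ 0) {b : ℝ}
    (h : ‖b • v - v‖ = ‖b • v + v‖) : b = 0 := by
  rw [show b • v - v = (b - 1) • v by module, show b • v + v = (b + 1) • v by module,
    norm_smul, norm_smul, Real.norm_eq_abs, Real.norm_eq_abs,
    mul_left_inj' (norm_ne_zero_iff.mpr hv)] at h
  rcases abs_eq_abs.mp h with h | h <;> linarith

theorem exists_smul_add_smul_eq_of_finrank_eq_two (hdim : Module.finrank ℝ X = 2) {u v : X}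
    (huv : LinearIndependent ℝ ![u, v]) (y : X) : ∃ a b : ℝ, a • u + b • v = y := by
  have : FiniteDimensional ℝ X := .of_finrank_pos (by omega)
  have hspan := huv.span_eq_top_of_card_eq_finrank' (by simp [hdim])
  rw [Matrix.range_cons_cons_empty] at hspan
  exact Submodule.mem_span_pair.mp (hspan ▸ Submodule.mem_top)

variable [StrictConvexSpace ℝ X]

/-- The point `z = (A / (1 - B)) • a` lies on the segment from `x` to `b`; from `z`, the unit
vector `a` is closer than the unit vector `b` by strict convexity. -/
theorem norm_sub_smul_add_smul_lt {a b : X} (ha : ‖a‖ = 1) (hb : ‖b‖ = 1) (hab : a ≠ b)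
    {A B : ℝ} (hA : 0 < A) (hB : B < 0) :
    ‖a - (A • a + B • b)‖ < ‖b - (A • a + B • b)‖ := by
  set x := A • a + B • b
  set ρ := A / (1 - B)
  have hρ : 0 < ρ := div_pos hA (by linarith)
  set z := ρ • a
  have hbx : b - x = (1 - B) • (b - z) := by
    simp only [x, z, ρ, smul_sub, smul_smul, mul_div_cancel₀ A (by linarith : (1 : ℝ) - B ≠ 0)]
    module
  have hzx : z - x = (-B) • (b - z) := by
    rw [show z - x = (b - x) - (b - z) by abel, hbx]
    module
  have hbz : ¬SameRay ℝ b z := fun h ↦ by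
    have hba : SameRay ℝ a b := by
      simpa [z, smul_smul, inv_mul_cancel₀ hρ.ne'] using (h.pos_smul_right (inv_pos.mpr hρ)).symm
    exact hab (eq_of_norm_eq_of_norm_add_eq (ha.trans hb.symm) (sameRay_iff_norm_add.mp hba))
  have hz : ‖z‖ = ρ := by rw [norm_smul, ha, mul_one, Real.norm_of_nonneg hρ.le]
  have haz : ‖a - z‖ = |‖b‖ - ‖z‖| := by
    rw [hb, hz, show a - z = (1 - ρ) • a by module, norm_smul, ha, mul_one, Real.norm_eq_abs]
  calc ‖a - x‖ ≤ ‖a - z‖ + ‖z - x‖ := norm_sub_le_norm_sub_add_norm_sub a z x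
    _ < ‖b - z‖ + ‖z - x‖ := by rw [haz]; gcongr; exact abs_lt_norm_sub_of_not_sameRay hbz
    _ = ‖b - x‖ := by
      rw [hbx, hzx, norm_smul, norm_smul, Real.norm_of_nonneg (by linarith),
        Real.norm_of_nonneg (by linarith)]
      ring

theorem norm_sub_ne_norm_add_of_pos_of_neg {u v : X} (hu : ‖u‖ = 1) (hv : ‖v‖ = 1) (huv : u ≠ v)
    {A B : ℝ} (hA : 0 < A) (hB : B < 0) (h : ‖A • u + B • v - u‖ = ‖A • u + B • v + u‖) :
    ‖A • u + B • v - v‖ ≠ ‖A • u + B • v + v‖ := by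
  intro h'
  have closer_u := norm_sub_smul_add_smul_lt hu hv huv hA hB
  have closer_neg_v := norm_sub_smul_add_smul_lt (a := -v) (b := -u) (by simpa) (by simpa)
    (neg_injective.ne huv.symm) (neg_pos.mpr hB) (neg_neg_of_pos hA)
  rw [show -B • -v + -A • -u = A • u + B • v by module] at closer_neg_v
  simp only [norm_sub_rev u, norm_sub_rev v, ← neg_add', norm_neg, add_comm v, add_comm u]
    at closer_u closer_neg_v
  linarith

theorem norm_sub_ne_norm_add_of_mul_neg {u v : X} (hu : ‖u‖ = 1) (hv : ‖v‖ = 1) (huv : u ≠ v)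
    {A B : ℝ} (hAB : A * B < 0) (h : ‖A • u + B • v - u‖ = ‖A • u + B • v + u‖) :
    ‖A • u + B • v - v‖ ≠ ‖A • u + B • v + v‖ := by
  rcases lt_or_gt_of_ne (left_ne_zero_of_mul hAB.ne) with hA | hA
  · rw [add_comm] at h ⊢
    exact fun h' ↦ norm_sub_ne_norm_add_of_pos_of_neg hv hu huv.symm
      (pos_of_mul_neg_right hAB hA.le) hA h' h
  · exact norm_sub_ne_norm_add_of_pos_of_neg hu hv huv hA (neg_of_mul_neg_right hAB hA.le) h

theorem eq_zero_of_norm_sub_eq_norm_add_of_finrank_eq_two (hdim : Module.finrank ℝ X = 2)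
    {u v : X} (hu : ‖u‖ = 1) (hv : ‖v‖ = 1) (huv : LinearIndependent ℝ ![u, v]) {y : X}
    (h₁ : ‖y - u‖ = ‖y + u‖) (h₂ : ‖y - v‖ = ‖y + v‖) : y = 0 := by
  obtain ⟨a, b, rfl⟩ := exists_smul_add_smul_eq_of_finrank_eq_two hdim huv y
  rcases eq_or_ne a 0 with rfl | ha
  · rw [zero_smul, zero_add] at h₂ ⊢
    rw [eq_zero_of_norm_smul_sub_eq_norm_smul_add (norm_ne_zero_iff.mp (by simp [hv])) h₂,
      zero_smul]
  rcases eq_or_ne b 0 with rfl | hb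
  · rw [zero_smul, add_zero] at h₁ ⊢
    rw [eq_zero_of_norm_smul_sub_eq_norm_smul_add (norm_ne_zero_iff.mp (by simp [hu])) h₁,
      zero_smul]
  exfalso
  rcases lt_or_gt_of_ne (mul_ne_zero ha hb) with hab | hab
  · exact norm_sub_ne_norm_add_of_mul_neg hu hv (huv.injective.ne zero_ne_one) hab h₁ h₂
  · have hu_ne_neg_v : u ≠ -v :=
      (LinearIndependent.pair_neg_right_iff.mpr huv).injective.ne zero_ne_one
    rw [← neg_smul_neg b v] at h₁ h₂
    refine norm_sub_ne_norm_add_of_mul_neg hu (by simpa) hu_ne_neg_v (by linarith) h₁ ?_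
    rwa [sub_neg_eq_add, ← sub_eq_add_neg, eq_comm]

end Plane

theorem Matrix.transpose_mul_self_eq_smul_one {ι : Type*} [Fintype ι] [DecidableEq ι]
    {H : Matrix ι ι ℝ} {c : ℝ} (hc : c ≠ 0) (h : H * Hᵀ = c • 1) : Hᵀ * H = c • 1 := by
  have hinv : (c⁻¹ • Hᵀ) * H = 1 :=
    mul_eq_one_comm.mp (by rw [Matrix.mul_smul, h, smul_smul, inv_mul_cancel₀ hc, one_smul])
  rwa [Matrix.smul_mul, inv_smul_eq_iff₀ hc] at hinv

theorem Matrix.apply_one_eq_apply_neg_one_of_sum_const {ι κ : Type*} [Fintype ι] [Fintype κ]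
    [DecidableEq ι] {H : Matrix ι ι ℝ} {c : ℝ} (hc : c ≠ 0) (horth : Hᵀ * H = c • 1)
    (hpm : ∀ i k, H i k = 1 ∨ H i k = -1) {k₀ : ι} (hk₀ : ∀ i, H i k₀ = 1) {J : κ → ι}
    (hJ : Function.Injective J) (hJk₀ : ∀ j, J j ≠ k₀) (f : κ → ℝ → ℝ) {S : ℝ}
    (hS : ∀ i, ∑ j, f j (H i (J j)) = S) (k : κ) : f k 1 = f k (-1) := by
  set α : κ → ℝ := fun j ↦ (f j 1 + f j (-1)) / 2
  set β : κ → ℝ := fun j ↦ (f j 1 - f j (-1)) / 2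
  have hf : ∀ i j, f j (H i (J j)) = α j + H i (J j) * β j := by
    intro i j
    rcases hpm i (J j) with h | h <;> rw [h] <;> ring
  have hcol : ∀ l l', ∑ i, H i l * H i l' = if l = l' then c else 0 := by
    intro l l'
    simpa [Matrix.mul_apply, Matrix.one_apply] using congrFun (congrFun horth l) l'
  have hsum : ∑ i, H i (J k) = 0 := by
    simpa [hk₀, hJk₀ k] using hcol (J k) k₀
  have key : ∑ i, H i (J k) * ∑ j, f j (H i (J j)) = c * β k := by
    calc ∑ i, H i (J k) * ∑ j, f j (H i (J j))
        = ∑ j, (α j * ∑ i, H i (J k) + β j * ∑ i, H i (J k) * H i (J j)) := by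
          simp_rw [hf, mul_sum]
          rw [sum_comm]
          refine sum_congr rfl fun j _ ↦ ?_
          rw [← sum_add_distrib]
          exact sum_congr rfl fun i _ ↦ by ring
      _ = c * β k := by classical simp [hsum, hcol, hJ.eq_iff, mul_comm]
  have hβ : β k = 0 := by
    refine (mul_eq_zero.mp ?_).resolve_left hc
    rw [← key]
    simp [hS, ← sum_mul, hsum]
  simp only [β] at hβ
  linarith

theorem IsHadamardMatrix.apply_one_eq_apply_neg_one_of_sum_const {n : ℕ} (hn : 1 ≤ n)
    {H : Matrix (Fin n) (Fin n) ℝ} (hH : IsHadamardMatrix H) (hnorm : ∀ i, H i ⟨0, hn⟩ = 1)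
    (f : Fin (n - 1) → ℝ → ℝ) {S : ℝ}
    (hS : ∀ i, ∑ j : Fin (n - 1), f j (H i ⟨(j : ℕ) + 1, by have := j.isLt; omega⟩) = S)
    (k : Fin (n - 1)) : f k 1 = f k (-1) := by
  have hn₀ : (n : ℝ) ≠ 0 := Nat.cast_ne_zero.mpr (by omega)
  exact Matrix.apply_one_eq_apply_neg_one_of_sum_const hn₀
    (Matrix.transpose_mul_self_eq_smul_one hn₀ hH.2) hH.1 hnorm
    (fun j j' h ↦ Fin.ext (by simpa using congrArg Fin.val h))
    (fun j h ↦ by simp [Fin.ext_iff] at h) f hS k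

/-- Let `h_1, …, h_n ∈ ℝ^{n−1}` be a Hadamard simplex (the rows of a
normalised Hadamard matrix `H` of order `n ≥ 1` with the initial `1` deleted:
`h_i j = H i (j+1)`), and `p ∈ [1, ∞)`. Let `u, v` be linearly independent unit vectors
in a strictly convex 2-dimensional normed space `X`. If `x = (x_1, …, x_{n−1})` in the
`ℓ_p`-sum of `n−1` copies of `X` has the same distance `c₁` to each point `h_i ⊗ u`
and the same distance `c₂` to each point `h_i ⊗ v`, then `x = 0`. -/
theorem statement15 (n : ℕ) (hn : 1 ≤ n)
    (H : Matrix (Fin n) (Fin n) ℝ) (hHad : IsHadamardMatrix H)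
    (hnorm : ∀ i : Fin n, H i ⟨0, hn⟩ = 1)
    (p : ℝ) (hp : 1 ≤ p)
    (X : Type*) [NormedAddCommGroup X] [NormedSpace ℝ X]
    [StrictConvexSpace ℝ X] (hdim : Module.finrank ℝ X = 2)
    (u v : X) (hu : ‖u‖ = 1) (hv : ‖v‖ = 1) (huv : LinearIndependent ℝ ![u, v])
    (x : Fin (n - 1) → X) (c₁ c₂ : ℝ)
    (hdist₁ : ∀ i : Fin n,
      (∑ j : Fin (n - 1),
          ‖x j - H i ⟨(j : ℕ) + 1, by have := j.isLt; omega⟩ • u‖ ^ p) ^ (1 / p) = c₁)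
    (hdist₂ : ∀ i : Fin n,
      (∑ j : Fin (n - 1),
          ‖x j - H i ⟨(j : ℕ) + 1, by have := j.isLt; omega⟩ • v‖ ^ p) ^ (1 / p) = c₂) :
    ∀ j : Fin (n - 1), x j = 0 := by
  have hp₀ : p ≠ 0 := (zero_lt_one.trans_le hp).ne'
  intro j
  have equidistant {w : X} {c : ℝ} (hdist : ∀ i : Fin n,
      (∑ j : Fin (n - 1),
          ‖x j - H i ⟨(j : ℕ) + 1, by have := j.isLt; omega⟩ • w‖ ^ p) ^ (1 / p) = c) :
      ‖x j - w‖ = ‖x j + w‖ := by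
    have hpow := hHad.apply_one_eq_apply_neg_one_of_sum_const hn hnorm
      (fun j s ↦ ‖x j - s • w‖ ^ p) (S := c ^ p) (fun i ↦ by
        rw [← hdist i, ← Real.rpow_mul (by positivity), one_div_mul_cancel hp₀, Real.rpow_one]) j
    simp only [one_smul, neg_one_smul, sub_neg_eq_add] at hpow
    exact Real.rpow_left_injOn hp₀ (norm_nonneg _) (norm_nonneg _) hpow
  exact eq_zero_of_norm_sub_eq_norm_add_of_finrank_eq_two hdim hu hv huv
    (equidistant hdist₁) (equidistant hdist₂)
end

section
/- Let x ≥ 1 be a real number. The open interval (x, 2x) contains the order of some Hadamard matrix if and only if x ∉ {1, 2, 4}. -/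
open Matrix

namespace Matrix

theorem map_intCast_smul_one {ι R : Type*} [DecidableEq ι] [Ring R] (n : ℕ) :
    ((n : ℤ) • (1 : Matrix ι ι ℤ)).map (Int.castRingHom R) = (n : R) • 1 := by
  rw [Matrix.map_smul' _ _ _ (map_mul _), Matrix.map_one _ (map_zero _) (map_one _)]
  simp

variable {n : ℕ}

theorem isHadamard_of_natAbs_eq_one {A : Matrix (Fin n) (Fin n) ℤ} (hn : n ≠ 0)
    (hA : ∀ i j, (A i j).natAbs = 1) (hAA : A * Aᵀ = (n : ℤ) • 1) : A.IsHadamard := by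
  refine .of_mul_conjTranspose (fun i j => ?_) ?_ ?_
  · exact Unitary.mem_iff_eq_one_or_eq_neg_one.mpr (Int.natAbs_eq_iff.mp (hA i j))
  · simpa [conjTranspose_eq_transpose_of_trivial] using hAA
  · simpa using IsRegular.of_ne_zero (Int.natCast_ne_zero.mpr hn)

theorem IsHadamard.isHadamardMatrix_map {A : Matrix (Fin n) (Fin n) ℤ} (hA : A.IsHadamard) :
    IsHadamardMatrix (A.map (Int.castRingHom ℝ)) := by
  refine ⟨fun i j => ?_, ?_⟩
  · rcases Unitary.mem_iff_eq_one_or_eq_neg_one.mp (hA.apply_mem i j) with h | h <;> simp [h]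
  · rw [← transpose_map, ← Matrix.map_mul, ← conjTranspose_eq_transpose_of_trivial,
      hA.mul_conjTranspose, Fintype.card_fin, map_intCast_smul_one]

end Matrix

namespace IsHadamardMatrix

variable {n : ℕ} {H : Matrix (Fin n) (Fin n) ℝ}

theorem exists_isHadamard_int (hH : IsHadamardMatrix H) (hn : n ≠ 0) :
    ∃ A : Matrix (Fin n) (Fin n) ℤ, A.IsHadamard := by
  let A : Matrix (Fin n) (Fin n) ℤ := of fun i j => if H i j = 1 then 1 else -1
  have hAH : A.map (Int.castRingHom ℝ) = H := by
    ext i j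
    rcases hH.1 i j with h | h <;> norm_num [A, h]
  have hA : ∀ i j, (A i j).natAbs = 1 := fun i j => by
    simp only [A, of_apply]
    split_ifs <;> rfl
  refine ⟨A, isHadamard_of_natAbs_eq_one hn hA ?_⟩
  apply map_injective (Int.castRingHom ℝ).injective_int
  beta_reduce
  rw [Matrix.map_mul, transpose_map, hAH, hH.2, map_intCast_smul_one]

theorem four_dvd (hH : IsHadamardMatrix H) (hn : 3 ≤ n) : 4 ∣ n := by
  obtain ⟨A, hA⟩ := hH.exists_isHadamard_int (by omega)
  simpa using hA.four_dvd_card (by simp; omega)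

end IsHadamardMatrix

def IsHadamardOrder (n : ℕ) : Prop :=
  ∃ A : Matrix (Fin n) (Fin n) ℤ, A.IsHadamard

theorem IsHadamardOrder.mul {m n : ℕ} (hm : IsHadamardOrder m) (hn : IsHadamardOrder n) :
    IsHadamardOrder (m * n) :=
  let ⟨_, hA⟩ := hm
  let ⟨_, hB⟩ := hn
  ⟨_, (hA.kronecker hB).reindex finProdFinEquiv finProdFinEquiv⟩

theorem isHadamardOrder_one : IsHadamardOrder 1 :=
  ⟨1, isHadamard_of_natAbs_eq_one one_ne_zero (by decide) (by decide)⟩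

theorem isHadamardOrder_two : IsHadamardOrder 2 :=
  ⟨!![1, 1; 1, -1], isHadamard_of_natAbs_eq_one two_ne_zero (by decide) (by decide)⟩

/-- Paley's matrix: entry `(i, j)` of its lower right `11 × 11` block is `1` exactly when
`j - i` is a quadratic non-residue modulo `11`. -/
theorem isHadamardOrder_twelve : IsHadamardOrder 12 :=
  ⟨!![1, 1, 1, 1, 1, 1, 1, 1, 1, 1, 1, 1;
      1, -1, -1, 1, -1, -1, -1, 1, 1, 1, -1, 1;
      1, 1, -1, -1, 1, -1, -1, -1, 1, 1, 1, -1;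
      1, -1, 1, -1, -1, 1, -1, -1, -1, 1, 1, 1;
      1, 1, -1, 1, -1, -1, 1, -1, -1, -1, 1, 1;
      1, 1, 1, -1, 1, -1, -1, 1, -1, -1, -1, 1;
      1, 1, 1, 1, -1, 1, -1, -1, 1, -1, -1, -1;
      1, -1, 1, 1, 1, -1, 1, -1, -1, 1, -1, -1;
      1, -1, -1, 1, 1, 1, -1, 1, -1, -1, 1, -1;
      1, -1, -1, -1, 1, 1, 1, -1, 1, -1, -1, 1;
      1, 1, -1, -1, -1, 1, 1, 1, -1, 1, -1, -1;
      1, -1, 1, -1, -1, -1, 1, 1, 1, -1, 1, -1],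
    isHadamard_of_natAbs_eq_one (by norm_num) (by decide) (by decide)⟩

theorem isHadamardOrder_two_pow (k : ℕ) : IsHadamardOrder (2 ^ k) := by
  induction k with
  | zero => exact isHadamardOrder_one
  | succ k ih => exact pow_succ 2 k ▸ ih.mul isHadamardOrder_two

theorem isHadamardOrder_twelve_mul_two_pow (k : ℕ) : IsHadamardOrder (12 * 2 ^ k) :=
  isHadamardOrder_twelve.mul (isHadamardOrder_two_pow k)

theorem exists_isHadamardOrder_mem_Ioo {x : ℝ} (hx : 1 ≤ x)
    (hx124 : x ∉ ({1, 2, 4} : Set ℝ)) :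
    ∃ n : ℕ, IsHadamardOrder n ∧ (n : ℝ) ∈ Set.Ioo x (2 * x) := by
  obtain ⟨k, hk, hk1⟩ := exists_nat_pow_near hx one_lt_two
  rcases hk.lt_or_eq with hk | rfl
  · refine ⟨2 ^ (k + 1), isHadamardOrder_two_pow _, by exact_mod_cast hk1, ?_⟩
    push_cast
    rw [pow_succ]
    linarith
  · have hk3 : 3 ≤ k := by
      by_contra! hk3
      interval_cases k <;> norm_num at hx124
    obtain ⟨j, rfl⟩ := Nat.exists_eq_add_of_le' hk3
    have hj : (0 : ℝ) < 2 ^ j := by positivity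
    refine ⟨12 * 2 ^ j, isHadamardOrder_twelve_mul_two_pow j, ?_, ?_⟩ <;> push_cast <;>
      rw [pow_add] <;> linarith

/-- Let `x ≥ 1` be a real number. The open interval `(x, 2x)` contains
the order of some Hadamard matrix if and only if `x ∉ {1, 2, 4}`. -/
theorem statement19 (x : ℝ) (hx : 1 ≤ x) :
    (∃ n : ℕ, (∃ H : Matrix (Fin n) (Fin n) ℝ, IsHadamardMatrix H) ∧
      x < (n : ℝ) ∧ (n : ℝ) < 2 * x) ↔ x ∉ ({1, 2, 4} : Set ℝ) := by
  constructor
  · rintro ⟨n, ⟨H, hH⟩, hxn, hnx⟩ hx124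
    have h4 := hH.four_dvd
    rcases hx124 with rfl | rfl | rfl <;> norm_num at hxn hnx <;> omega
  · intro hx124
    obtain ⟨n, ⟨A, hA⟩, hxn, hnx⟩ := exists_isHadamardOrder_mem_Ioo hx hx124
    exact ⟨n, ⟨_, hA.isHadamardMatrix_map⟩, hxn, hnx⟩
end
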